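/- arXiv:math/0009170 — 3 statements merged into one kernel-verified Lean document; each statement's English description precedes it below -/
import Mathlib

section
/- Let C be a commutative star ring in which 2 is invertible, A a unital *-algebra over C, and qA = (A[[λ]], ⋆) a Hermitian formal deformation of A. Fix n ≥ 1 and consider M_n(A)[[λ]] = M_n(qA) with the deformed product ⋆ and the conjugate-transpose involution. If L_0 ∈ M_n(A) is invertible and S = Σ_{r≥0} S_r λ^r ∈ M_n(A)[[λ]] satisfies S* = S and S_0 = L_0* L_0, then there exist L_r ∈ M_n(A) for r ≥ 1 such that L = L_0 + Σ_{r≥1} L_r λ^r satisfies S = L* ⋆ L. -/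
open scoped Matrix

/-- Cauchy-type convolution of two formal series along a family of
coefficient maps `B r : M → N → P`:  `(x ⋆ y) n = ∑_{r+i+j=n} B r (x i) (y j)`. -/
def fdConv {M N P : Type*} [AddCommMonoid P] (B : ℕ → M → N → P)
    (x : ℕ → M) (y : ℕ → N) : ℕ → P := fun n =>
  ∑ p ∈ Finset.HasAntidiagonal.antidiagonal n, ∑ q ∈ Finset.HasAntidiagonal.antidiagonal p.2, B p.1 (x q.1) (y q.2)

/-- The unit formal series `1 + 0·λ + 0·λ² + ⋯`. -/
def fdOne (A : Type*) [One A] [Zero A] : ℕ → A := fun n => if n = 0 then 1 else 0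

/-- An element viewed as a constant (order-zero) formal series. -/
def fdC {A : Type*} [Zero A] (a : A) : ℕ → A := fun n => if n = 0 then a else 0

/-- Coefficientwise star of a formal series. -/
def fdStar {A : Type*} [Star A] (x : ℕ → A) : ℕ → A := fun n => star (x n)

/-- Action of a scalar series `c ∈ k[[λ]]` on series with coefficients in a `k`-module. -/
def fdSmul {k M : Type*} [Semiring k] [AddCommMonoid M] [Module k M]
    (c : ℕ → k) (x : ℕ → M) : ℕ → M := fun n =>
  ∑ p ∈ Finset.HasAntidiagonal.antidiagonal n, c p.1 • x p.2

/-- Order-by-order extension of a family of maps `T r : E → F` to formal series: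
`(T x) n = ∑_{r+j=n} T r (x j)`. -/
def fdMap {E F : Type*} [AddCommMonoid F] (T : ℕ → E → F) (x : ℕ → E) : ℕ → F :=
  fun n => ∑ p ∈ Finset.HasAntidiagonal.antidiagonal n, T p.1 (x p.2)

/-- A formal deformation (à la Gerstenhaber) of a unital `k`-algebra `A`:
a family of `k`-bilinear cochains `C r` with `C 0` the original product, whose
convolution product on `A[[λ]]` is associative and unital (with the same unit). -/
structure FormalDeformation (k A : Type*) [CommRing k] [Ring A] [Algebra k A] where
  C : ℕ → A →ₗ[k] A →ₗ[k] A
  C_zero : ∀ a b : A, C 0 a b = a * b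
  assoc : ∀ x y z : ℕ → A,
    fdConv (fun r a b => C r a b) (fdConv (fun r a b => C r a b) x y) z =
      fdConv (fun r a b => C r a b) x (fdConv (fun r a b => C r a b) y z)
  one_mul : ∀ x : ℕ → A, fdConv (fun r a b => C r a b) (fdOne A) x = x
  mul_one : ∀ x : ℕ → A, fdConv (fun r a b => C r a b) x (fdOne A) = x

namespace FormalDeformation

variable {k A : Type*} [CommRing k] [Ring A] [Algebra k A]

/-- The deformed product on `A[[λ]]`. -/
def mul (D : FormalDeformation k A) : (ℕ → A) → (ℕ → A) → ℕ → A :=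
  fdConv fun r a b => D.C r a b

/-- A deformation of a `*`-algebra is Hermitian if the coefficientwise extension of
the involution is still an involution for the deformed product. -/
def IsHermitian [StarRing A] (D : FormalDeformation k A) : Prop :=
  ∀ x y : ℕ → A, fdStar (D.mul x y) = D.mul (fdStar y) (fdStar x)

/-- The extension of the deformation cochains to matrices. -/
def matC (D : FormalDeformation k A) (n : ℕ) (r : ℕ)
    (L S : Matrix (Fin n) (Fin n) A) : Matrix (Fin n) (Fin n) A :=
  Matrix.of fun i j => ∑ s, D.C r (L i s) (S s j)

/-- The deformed product on `M_n(A)[[λ]] = M_n(A[[λ]])`. -/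
def matMul (D : FormalDeformation k A) (n : ℕ) :
    (ℕ → Matrix (Fin n) (Fin n) A) → (ℕ → Matrix (Fin n) (Fin n) A) →
      ℕ → Matrix (Fin n) (Fin n) A :=
  fdConv (D.matC n)

/-- The deformed left action of `M_n(A)[[λ]]` on column vectors `A^n[[λ]]`. -/
def mvMul (D : FormalDeformation k A) (n : ℕ) :
    (ℕ → Matrix (Fin n) (Fin n) A) → (ℕ → Fin n → A) → ℕ → Fin n → A :=
  fdConv fun r L v => fun i => ∑ j, D.C r (L i j) (v j)

/-- The deformed right action of `A[[λ]]` on column vectors `A^n[[λ]]`. -/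
def vsMul (D : FormalDeformation k A) (n : ℕ) :
    (ℕ → Fin n → A) → (ℕ → A) → ℕ → Fin n → A :=
  fdConv fun r v a => fun i => D.C r (v i) a

end FormalDeformation


/-!
The factor `L` is built order by order. For `m ≥ 1` the unknown `L m` enters the coefficient
`(Lᴴ ⋆ L) m` only through `(L m)ᴴ * L₀ + L₀ᴴ * L m`; the remaining part is the `m`-th coefficient
of `Tᴴ ⋆ T` for the truncation `T` of `L` below order `m`, which is Hermitian because the
deformation is. Hence `R = S m - (Tᴴ ⋆ T) m` is Hermitian, and `L m = ½ (L₀ᴴ)⁻¹ R` solves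
`(L m)ᴴ * L₀ + L₀ᴴ * L m = R`.
-/

open Finset

def fdTrunc {M : Type*} [Zero M] (x : ℕ → M) (m : ℕ) : ℕ → M :=
  fun j => if j < m then x j else 0

theorem fdTrunc_map {M N : Type*} [Zero M] [Zero N] (f : M → N) (hf : f 0 = 0) (x : ℕ → M)
    (m : ℕ) : fdTrunc (fun j => f (x j)) m = fun j => f (fdTrunc x m j) := by
  funext j
  unfold fdTrunc
  split_ifs <;> simp [hf]

theorem exists_eq_apply_fdTrunc {M : Type*} [Zero M] (F : ℕ → (ℕ → M) → M) :
    ∃ x : ℕ → M, ∀ m, x m = F m (fdTrunc x m) :=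
  ⟨Nat.strongRec fun m x => F m fun j => if h : j < m then x j h else 0, fun m =>
    (Nat.strongRec_eq _ m).trans rfl⟩

theorem fdConv_apply_zero {M N P : Type*} [AddCommMonoid P] (B : ℕ → M → N → P)
    (x : ℕ → M) (y : ℕ → N) : fdConv B x y 0 = B 0 (x 0) (y 0) := by
  simp [fdConv]

theorem fdConv_apply_eq_fdTrunc_add {M N P : Type*} [Zero M] [Zero N] [AddCommMonoid P]
    (B : ℕ → M → N → P) (hB₁ : ∀ r y, B r 0 y = 0) (hB₂ : ∀ r x, B r x 0 = 0)
    (x : ℕ → M) (y : ℕ → N) {m : ℕ} (hm : m ≠ 0) :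
    fdConv B x y m =
      fdConv B (fdTrunc x m) (fdTrunc y m) m + (B 0 (x m) (y 0) + B 0 (x 0) (y m)) := by
  have trunc_eq {r i j : ℕ} (hi : i < m) (hj : j < m) :
      B r (fdTrunc x m i) (fdTrunc y m j) = B r (x i) (y j) := by
    simp only [fdTrunc, if_pos hi, if_pos hj]
  have hm0 : ((m, 0) : ℕ × ℕ) ∈ antidiagonal m := by simp
  have h0m : ((0, m) : ℕ × ℕ) ∈ (antidiagonal m).erase (m, 0) := by simp [hm.symm]
  have corner : ∑ q ∈ antidiagonal m, B 0 (x q.1) (y q.2) =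
      ∑ q ∈ antidiagonal m, B 0 (fdTrunc x m q.1) (fdTrunc y m q.2) +
        (B 0 (x m) (y 0) + B 0 (x 0) (y m)) := by
    rw [← add_sum_erase _ _ hm0, ← add_sum_erase _ _ h0m, ← add_sum_erase _ _ hm0,
      ← add_sum_erase _ _ h0m]
    have hrest : ∀ q ∈ ((antidiagonal m).erase (m, 0)).erase (0, m),
        B 0 (x q.1) (y q.2) = B 0 (fdTrunc x m q.1) (fdTrunc y m q.2) := by
      intro q hq
      simp only [mem_erase, HasAntidiagonal.mem_antidiagonal, ne_eq, Prod.ext_iff] at hq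
      exact (trunc_eq (by omega) (by omega)).symm
    simp only [sum_congr rfl hrest, fdTrunc, lt_irrefl, if_false, hB₁, hB₂, Nat.pos_of_ne_zero hm]
    abel
  have hp0 : ((0, m) : ℕ × ℕ) ∈ antidiagonal m := by simp
  have hfar : ∀ p ∈ (antidiagonal m).erase (0, m),
      ∑ q ∈ antidiagonal p.2, B p.1 (x q.1) (y q.2) =
        ∑ q ∈ antidiagonal p.2, B p.1 (fdTrunc x m q.1) (fdTrunc y m q.2) := by
    intro p hp
    simp only [mem_erase, HasAntidiagonal.mem_antidiagonal, ne_eq, Prod.ext_iff] at hp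
    refine sum_congr rfl fun q hq => ?_
    rw [HasAntidiagonal.mem_antidiagonal] at hq
    exact (trunc_eq (by omega) (by omega)).symm
  unfold fdConv
  rw [← add_sum_erase _ _ hp0, sum_congr rfl hfar, ← add_sum_erase _
    (fun p => ∑ q ∈ antidiagonal p.2, B p.1 (fdTrunc x m q.1) (fdTrunc y m q.2)) hp0]
  dsimp only
  rw [corner]
  abel

theorem star_mul_add_star_mul_eq_of_isSelfAdjoint {R : Type*} [Ring R] [StarRing R]
    [Invertible (2 : R)] (u : Rˣ) {r : R} (hr : IsSelfAdjoint r) :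
    star (star (↑u⁻¹ : R) * (⅟2 * r)) * u + star (u : R) * (star (↑u⁻¹ : R) * (⅟2 * r)) = r := by
  have h2 : star (⅟2 : R) = ⅟2 := by
    rw [star_invOf]
    exact invertible_unique _ _ (star_ofNat 2)
  have hc : r * ⅟2 = ⅟2 * r := ((Commute.ofNat_left 2 r).invOf_left).eq.symm
  have hu : star (u : R) * star (↑u⁻¹ : R) = 1 := by rw [← star_mul, u.inv_mul, star_one]
  rw [star_mul, star_star, star_mul, hr.star_eq, h2, mul_assoc, u.inv_mul, mul_one,
    ← mul_assoc, hu, one_mul, hc, ← add_mul, invOf_two_add_invOf_two, one_mul]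

namespace FormalDeformation

variable {k A : Type*} [CommRing k] [Ring A] [Algebra k A] (D : FormalDeformation k A)

theorem mul_fdC_fdC (a b : A) (r : ℕ) : D.mul (fdC a) (fdC b) r = D.C r a b := by
  rw [mul, fdConv, sum_eq_single (r, 0)]
  · simp [fdC]
  · rintro ⟨i, j⟩ hij hne
    refine sum_eq_zero fun q hq => ?_
    simp only [HasAntidiagonal.mem_antidiagonal] at hij hq
    have : q.1 ≠ 0 ∨ q.2 ≠ 0 := by
      by_contra! h
      exact hne (Prod.ext (by simp; omega) (by simp; omega))
    rcases this with h | h <;> simp [fdC, h]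
  · simp

theorem IsHermitian.star_C [StarRing A] {D : FormalDeformation k A} (hD : D.IsHermitian)
    (r : ℕ) (a b : A) : star (D.C r a b) = D.C r (star b) (star a) := by
  have fdStar_fdC (c : A) : fdStar (fdC c) = fdC (star c) := by
    funext j
    simp only [fdStar, fdC]
    split_ifs <;> simp
  simpa only [fdStar, mul_fdC_fdC, fdStar_fdC] using congrFun (hD (fdC a) (fdC b)) r

variable {n : ℕ}

theorem matC_zero (P Q : Matrix (Fin n) (Fin n) A) : D.matC n 0 P Q = P * Q := by
  ext i j
  simp [matC, D.C_zero, Matrix.mul_apply]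

theorem IsHermitian.conjTranspose_matC [StarRing A] {D : FormalDeformation k A}
    (hD : D.IsHermitian) (r : ℕ) (P Q : Matrix (Fin n) (Fin n) A) :
    (D.matC n r P Q)ᴴ = D.matC n r Qᴴ Pᴴ := by
  ext i j
  simp [matC, Matrix.conjTranspose_apply, star_sum, hD.star_C]

theorem IsHermitian.isSelfAdjoint_matMul_conjTranspose_self [StarRing A]
    {D : FormalDeformation k A} (hD : D.IsHermitian) (X : ℕ → Matrix (Fin n) (Fin n) A)
    (m : ℕ) : IsSelfAdjoint (D.matMul n (fun j => (X j)ᴴ) X m) := by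
  simp only [IsSelfAdjoint, matMul, fdConv, Matrix.star_eq_conjTranspose,
    Matrix.conjTranspose_sum, hD.conjTranspose_matC, Matrix.conjTranspose_conjTranspose]
  refine sum_congr rfl fun p _ => ?_
  exact Finset.Nat.sum_antidiagonal_swap (f := fun q => D.matC n p.1 (X q.1)ᴴ (X q.2))

theorem matMul_apply_zero (X Y : ℕ → Matrix (Fin n) (Fin n) A) :
    D.matMul n X Y 0 = X 0 * Y 0 := by
  rw [matMul, fdConv_apply_zero, matC_zero]

theorem matMul_apply_of_ne_zero (X Y : ℕ → Matrix (Fin n) (Fin n) A) {m : ℕ} (hm : m ≠ 0) :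
    D.matMul n X Y m =
      D.matMul n (fdTrunc X m) (fdTrunc Y m) m + (X m * Y 0 + X 0 * Y m) := by
  have hzero_left (r : ℕ) (Q : Matrix (Fin n) (Fin n) A) : D.matC n r 0 Q = 0 := by
    ext; simp [matC]
  have hzero_right (r : ℕ) (P : Matrix (Fin n) (Fin n) A) : D.matC n r P 0 = 0 := by
    ext; simp [matC]
  rw [matMul, fdConv_apply_eq_fdTrunc_add _ hzero_left hzero_right _ _ hm, matC_zero, matC_zero]

end FormalDeformation

theorem hermitian_square_root_deformation_general {C A : Type*} [CommRing C]
    [Invertible (2 : C)] [Ring A] [Algebra C A] [StarRing A]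
    (D : FormalDeformation C A) (hD : D.IsHermitian)
    (n : ℕ)
    (L₀ : Matrix (Fin n) (Fin n) A) (hL₀ : IsUnit L₀)
    (S : ℕ → Matrix (Fin n) (Fin n) A)
    (hSherm : ∀ m, (S m)ᴴ = S m)
    (hS0 : S 0 = L₀ᴴ * L₀) :
    ∃ L : ℕ → Matrix (Fin n) (Fin n) A,
      L 0 = L₀ ∧ S = D.matMul n (fun m => (L m)ᴴ) L := by
  obtain ⟨u, rfl⟩ := hL₀
  have : Invertible (2 : Matrix (Fin n) (Fin n) A) :=
    (Invertible.map (algebraMap C _) 2).copy 2 (map_ofNat _ 2).symm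
  obtain ⟨L, hL⟩ := exists_eq_apply_fdTrunc fun m X => if m = 0 then (u : Matrix _ _ A) else
    star (↑u⁻¹ : Matrix _ _ A) * (⅟2 * (S m - D.matMul n (fun j => (X j)ᴴ) X m))
  have hL0 : L 0 = u := by simpa using hL 0
  refine ⟨L, hL0, funext fun m => ?_⟩
  rcases eq_or_ne m 0 with rfl | hm
  · rw [D.matMul_apply_zero, hL0, hS0]
  · have hR : IsSelfAdjoint (S m - D.matMul n (fun j => (fdTrunc L m j)ᴴ) (fdTrunc L m) m) :=
      IsSelfAdjoint.sub (hSherm m) (hD.isSelfAdjoint_matMul_conjTranspose_self _ m)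
    rw [D.matMul_apply_of_ne_zero _ _ hm, fdTrunc_map _ Matrix.conjTranspose_zero, hL0, hL m,
      if_neg hm, ← Matrix.star_eq_conjTranspose, ← Matrix.star_eq_conjTranspose,
      star_mul_add_star_mul_eq_of_isSelfAdjoint u hR]
    abel

/-- Lemma 2.2, "TrickLem". If `S` is a Hermitian formal series of
matrices whose zeroth coefficient is `L₀ᴴ * L₀` with `L₀` invertible, then `S` factors
as `S = Lᴴ ⋆ L` for some deformation `L` of `L₀`. -/
theorem hermitian_square_root_deformation {C A : Type*} [CommRing C] [StarRing C]
    [Invertible (2 : C)] [Ring A] [Algebra C A] [StarRing A] [StarModule C A]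
    (D : FormalDeformation C A) (hD : D.IsHermitian)
    (n : ℕ) (hn : 1 ≤ n)
    (L₀ : Matrix (Fin n) (Fin n) A) (hL₀ : IsUnit L₀)
    (S : ℕ → Matrix (Fin n) (Fin n) A)
    (hSherm : ∀ m, (S m)ᴴ = S m)
    (hS0 : S 0 = L₀ᴴ * L₀) :
    ∃ L : ℕ → Matrix (Fin n) (Fin n) A,
      L 0 = L₀ ∧ S = D.matMul n (fun m => (L m)ᴴ) L :=
  hermitian_square_root_deformation_general D hD n L₀ hL₀ S hSherm hS0
end

section
/- Let k be a commutative unital ring, A a unital k-algebra, qA = (A[[λ]], ⋆) a formal deformation of A, and E a finitely generated projective right A-module with action x·a. Then there exists a deformation of E corresponding to qA: k-bilinear maps R_r : E × A → E for r ≥ 1 such that the k[[λ]]-bilinear extension of x • a := x·a + Σ_{r≥1} R_r(x,a) λ^r makes the k[[λ]]-module E[[λ]] into a unital right module over qA, and this qA-module (E[[λ]], •) is finitely generated and projective over qA. -/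
open scoped Matrix

/-!
The dual basis gives an idempotent `e = (f i (ξ j))` in `M_m(A)` with `E ≅ e A^m`. The
iteration `X ↦ 3X² - 2X³` squares the defect `X² - X` up to a unit, so it doubles its
`λ`-adic order and converges to an idempotent `ê` of `M_m(qA)` lifting `e`. The map
`x ↦ ê (f i x)ᵢ` identifies `E[[λ]]` with `ê qA^m`: it is injective because composing it with
`u ↦ ∑ ξ i · u i` gives an order-by-order endomorphism of `E[[λ]]` with leading term the
identity, hence invertible, and it is onto `ê qA^m` because an element of `ê qA^m` killed by
that projection vanishes order by order. Transporting the right `qA`-module `ê qA^m` to `E[[λ]]`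
gives the deformed action, and the columns of `ê` with the coordinates of `x ↦ ê (f i x)ᵢ`
form a dual basis over `qA`. Every map involved is order by order, so the action is given
by `k`-bilinear cochains.
-/

open Finset

section SeriesCalculus

variable {k M N P Q : Type*} [CommSemiring k] [AddCommMonoid M] [AddCommMonoid N]
  [AddCommMonoid P] [AddCommMonoid Q] [Module k M] [Module k N] [Module k P] [Module k Q]

theorem sum_antidiagonal_antidiagonal {V : Type*} [AddCommMonoid V] (n : ℕ)
    (g : ℕ → ℕ → ℕ → V) :
    ∑ p ∈ antidiagonal n, ∑ q ∈ antidiagonal p.2, g p.1 q.1 q.2 =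
      ∑ p ∈ antidiagonal n, ∑ q ∈ antidiagonal p.1, g q.1 q.2 p.2 := by
  simp only [Finset.sum_sigma']
  apply Finset.sum_nbij' (fun x => ⟨(x.1.1 + x.2.1, x.2.2), (x.1.1, x.2.1)⟩)
    (fun x => ⟨(x.2.1, x.2.2 + x.1.2), (x.2.2, x.1.2)⟩) <;>
    aesop (add simp [add_assoc])

theorem fdMap_fdMap (U : ℕ → N →ₗ[k] P) (V : ℕ → M →ₗ[k] N) (x : ℕ → M) :
    fdMap (fun r => U r) (fdMap (fun r => V r) x) =
      fdMap (fun d => ⇑(∑ p ∈ antidiagonal d, U p.1 ∘ₗ V p.2)) x := by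
  funext n
  simp only [fdMap, map_sum, LinearMap.coe_sum, Finset.sum_apply, LinearMap.comp_apply]
  exact sum_antidiagonal_antidiagonal n fun a b c => U a (V b (x c))

theorem fdMap_fdConv (U : ℕ → P →ₗ[k] Q) (B : ℕ → M →ₗ[k] N →ₗ[k] P) (x : ℕ → M)
    (y : ℕ → N) :
    fdMap (fun r => U r) (fdConv (fun r u v => B r u v) x y) =
      fdConv (fun d u v => (∑ p ∈ antidiagonal d, (B p.2).compr₂ (U p.1)) u v) x y := by
  funext n
  simp only [fdMap, fdConv, map_sum, LinearMap.coe_sum, Finset.sum_apply,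
    LinearMap.compr₂_apply]
  rw [sum_antidiagonal_antidiagonal n fun a b c =>
    ∑ q ∈ antidiagonal c, U a (B b (x q.1) (y q.2))]
  exact Finset.sum_congr rfl fun p _ => Finset.sum_comm

theorem fdConv_fdMap_left (B : ℕ → N →ₗ[k] P →ₗ[k] Q) (V : ℕ → M →ₗ[k] N) (x : ℕ → M)
    (y : ℕ → P) :
    fdConv (fun r u v => B r u v) (fdMap (fun r => V r) x) y =
      fdConv (fun d u v => (∑ p ∈ antidiagonal d, (B p.1).comp (V p.2)) u v) x y := by
  funext n
  simp only [fdMap, fdConv, map_sum, LinearMap.comp_apply, LinearMap.sum_apply]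
  have inner : ∀ p ∈ antidiagonal n,
      ∑ q ∈ antidiagonal p.2, ∑ u ∈ antidiagonal q.1, B p.1 (V u.1 (x u.2)) (y q.2) =
        ∑ q ∈ antidiagonal p.2, ∑ u ∈ antidiagonal q.2, B p.1 (V q.1 (x u.1)) (y u.2) :=
    fun p _ => (sum_antidiagonal_antidiagonal p.2 fun a b c => B p.1 (V a (x b)) (y c)).symm
  rw [Finset.sum_congr rfl inner, sum_antidiagonal_antidiagonal n fun a b c =>
    ∑ u ∈ antidiagonal c, B a (V b (x u.1)) (y u.2)]
  exact Finset.sum_congr rfl fun p _ => Finset.sum_comm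

theorem fdConv_eq_fdMap (B : ℕ → M →ₗ[k] N →ₗ[k] P) (x : ℕ → M) (y : ℕ → N) :
    fdConv (fun r u v => B r u v) x y =
      fdMap (fun d => ⇑(∑ p ∈ antidiagonal d, B p.1 (x p.2))) y := by
  funext n
  simp only [fdMap, fdConv, LinearMap.coe_sum, Finset.sum_apply]
  exact (sum_antidiagonal_antidiagonal n fun a b c => B a (x b) (y c))

theorem fdMap_coeff_mul (F G : PowerSeries (Module.End k M)) (x : ℕ → M) :
    fdMap (fun r => ⇑(PowerSeries.coeff r (F * G))) x =
      fdMap (fun r => ⇑(PowerSeries.coeff r F)) (fdMap (fun r => ⇑(PowerSeries.coeff r G)) x) := by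
  simp only [fdMap_fdMap, PowerSeries.coeff_mul, Module.End.mul_eq_comp]

theorem fdMap_coeff_one (x : ℕ → M) :
    fdMap (fun r => ⇑(PowerSeries.coeff r (1 : PowerSeries (Module.End k M)))) x = x := by
  funext n
  rw [fdMap, Finset.Nat.sum_antidiagonal_eq_sum_range_succ_mk, Finset.sum_range_succ']
  simp [PowerSeries.coeff_one]

theorem sum_fdMap_apply {ι : Type*} (s : Finset ι) (φ : ι → N →ₗ[k] P) (U : ι → ℕ → M →ₗ[k] N)
    (x : ℕ → M) :
    (fun n => ∑ i ∈ s, φ i (fdMap (fun r => U i r) x n)) =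
      fdMap (fun d => ⇑(∑ i ∈ s, φ i ∘ₗ U i d)) x := by
  funext n
  simp only [fdMap, map_sum, LinearMap.coe_sum, Finset.sum_apply, LinearMap.comp_apply]
  exact Finset.sum_comm

theorem fdMap_add (U : ℕ → M →ₗ[k] N) (x y : ℕ → M) :
    fdMap (fun r => U r) (x + y) = fdMap (fun r => U r) x + fdMap (fun r => U r) y :=
  funext fun n => by simp [fdMap, Finset.sum_add_distrib]

theorem sum_fdMap {ι : Type*} (s : Finset ι) (U : ι → ℕ → M →ₗ[k] N) (x : ℕ → M) :
    ∑ i ∈ s, fdMap (fun r => U i r) x = fdMap (fun d => ⇑(∑ i ∈ s, U i d)) x := by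
  funext n
  simp only [fdMap, Finset.sum_apply, LinearMap.coe_sum]
  exact Finset.sum_comm

theorem sum_fdConv_apply {ι : Type*} (s : Finset ι) (φ : ι → P →ₗ[k] Q)
    (B : ι → ℕ → M →ₗ[k] N →ₗ[k] P) (x : ℕ → M) (y : ℕ → N) :
    (fun n => ∑ i ∈ s, φ i (fdConv (fun r u v => B i r u v) x y n)) =
      fdConv (fun d u v => (∑ i ∈ s, (B i d).compr₂ (φ i)) u v) x y := by
  funext n
  simp only [fdConv, map_sum, LinearMap.coe_sum, Finset.sum_apply, LinearMap.compr₂_apply]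
  rw [Finset.sum_comm]
  exact Finset.sum_congr rfl fun p _ => Finset.sum_comm

variable (B : ℕ → M →ₗ[k] N →ₗ[k] P)

theorem fdConv_add_left (x y : ℕ → M) (z : ℕ → N) :
    fdConv (fun r u v => B r u v) (x + y) z =
      fdConv (fun r u v => B r u v) x z + fdConv (fun r u v => B r u v) y z :=
  funext fun n => by simp [fdConv, Finset.sum_add_distrib]

theorem fdConv_add_right (x : ℕ → M) (y z : ℕ → N) :
    fdConv (fun r u v => B r u v) x (y + z) =
      fdConv (fun r u v => B r u v) x y + fdConv (fun r u v => B r u v) x z :=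
  funext fun n => by simp [fdConv, Finset.sum_add_distrib]

theorem fdConv_zero_left (z : ℕ → N) : fdConv (fun r u v => B r u v) (0 : ℕ → M) z = 0 :=
  funext fun n => by simp [fdConv]

theorem fdConv_zero_right (x : ℕ → M) : fdConv (fun r u v => B r u v) x (0 : ℕ → N) = 0 :=
  funext fun n => by simp [fdConv]

end SeriesCalculus

namespace FormalDeformation

variable {k A : Type*} [CommRing k] [Ring A] [Algebra k A]

/-- `A[[λ]]` with the deformed product `⋆`, as a ring. -/
def DeformedAlgebra (_D : FormalDeformation k A) : Type _ := ℕ → A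

variable {D : FormalDeformation k A}

namespace DeformedAlgebra

instance : AddCommGroup D.DeformedAlgebra := inferInstanceAs (AddCommGroup (ℕ → A))

instance : Ring D.DeformedAlgebra where
  mul := D.mul
  one := fdOne A
  mul_assoc := D.assoc
  one_mul := D.one_mul
  mul_one := D.mul_one
  left_distrib := fdConv_add_right fun r => D.C r
  right_distrib := fdConv_add_left fun r => D.C r
  zero_mul := fdConv_zero_left fun r => D.C r
  mul_zero := fdConv_zero_right fun r => D.C r

theorem mul_apply (x y : D.DeformedAlgebra) (n : ℕ) :
    (x * y) n = ∑ p ∈ antidiagonal n, ∑ q ∈ antidiagonal p.2, D.C p.1 (x q.1) (y q.2) :=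
  rfl

theorem add_apply (x y : D.DeformedAlgebra) (n : ℕ) : (x + y) n = x n + y n :=
  rfl

theorem sub_apply (x y : D.DeformedAlgebra) (n : ℕ) : (x - y) n = x n - y n :=
  rfl

theorem sum_apply {ι : Type*} (s : Finset ι) (x : ι → D.DeformedAlgebra) (n : ℕ) :
    (∑ i ∈ s, x i) n = ∑ i ∈ s, x i n :=
  Finset.sum_apply n s x

theorem mul_apply_congr {x x' y y' : D.DeformedAlgebra} {n : ℕ}
    (hx : ∀ l ≤ n, x l = x' l) (hy : ∀ l ≤ n, y l = y' l) : (x * y) n = (x' * y') n := by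
  simp only [mul_apply]
  refine Finset.sum_congr rfl fun p hp => Finset.sum_congr rfl fun q hq => ?_
  rw [HasAntidiagonal.mem_antidiagonal] at hp hq
  rw [hx q.1 (by omega), hy q.2 (by omega)]

theorem mul_apply_eq_zero {x y : D.DeformedAlgebra} {a b : ℕ}
    (hx : ∀ l < a, x l = 0) (hy : ∀ l < b, y l = 0) {n : ℕ} (hn : n < a + b) :
    (x * y) n = 0 := by
  rw [mul_apply]
  refine Finset.sum_eq_zero fun p hp => Finset.sum_eq_zero fun q hq => ?_
  rw [HasAntidiagonal.mem_antidiagonal] at hp hq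
  rcases lt_or_ge q.1 a with h | h
  · simp [hx q.1 h]
  · simp [hy q.2 (by omega)]

theorem mul_apply_of_forall_lt_eq_zero (x : D.DeformedAlgebra) {y : D.DeformedAlgebra} {n : ℕ}
    (hy : ∀ l < n, y l = 0) : (x * y) n = x 0 * y n := by
  rw [mul_apply, Finset.sum_eq_single (0, n), Finset.sum_eq_single (0, n)]
  · rw [D.C_zero]
  · intro q hq hne
    rw [HasAntidiagonal.mem_antidiagonal] at hq
    rw [hy q.2 (by grind), map_zero]
  · simp
  · intro p hp hne
    refine Finset.sum_eq_zero fun q hq => ?_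
    rw [HasAntidiagonal.mem_antidiagonal] at hp hq
    rw [hy q.2 (by grind), map_zero]
  · simp

def constantCoeff : D.DeformedAlgebra →+* A where
  toFun x := x 0
  map_one' := rfl
  map_mul' x _ := mul_apply_of_forall_lt_eq_zero x fun _ h => absurd h (Nat.not_lt_zero _)
  map_zero' := rfl
  map_add' _ _ := rfl

end DeformedAlgebra

variable {ι : Type*} [Fintype ι]

def VanishesBelow (p : ℕ) (X : Matrix ι ι D.DeformedAlgebra) : Prop :=
  ∀ i j, ∀ n < p, X i j n = 0

theorem VanishesBelow.mul {a b : ℕ} {X Y : Matrix ι ι D.DeformedAlgebra}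
    (hX : VanishesBelow a X) (hY : VanishesBelow b Y) : VanishesBelow (a + b) (X * Y) :=
  fun i j _ hn => by
    rw [Matrix.mul_apply, DeformedAlgebra.sum_apply]
    exact Finset.sum_eq_zero fun s _ =>
      DeformedAlgebra.mul_apply_eq_zero (hX i s) (hY s j) hn

theorem VanishesBelow.mul_right {a : ℕ} {X : Matrix ι ι D.DeformedAlgebra}
    (hX : VanishesBelow a X) (Y : Matrix ι ι D.DeformedAlgebra) : VanishesBelow a (X * Y) := by
  simpa using hX.mul (b := 0) (Y := Y) fun _ _ _ h => absurd h (Nat.not_lt_zero _)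

variable [DecidableEq ι]

variable (D) in
def idempotentIterate (e : Matrix ι ι A) : ℕ → Matrix ι ι D.DeformedAlgebra
  | 0 => Matrix.of fun i j => fdC (e i j)
  | N + 1 => 3 * idempotentIterate e N ^ 2 - 2 * idempotentIterate e N ^ 3

section Iterate

variable {e : Matrix ι ι A}

theorem constantCoeff_idempotentIterate (he : IsIdempotentElem e) (N : ℕ) :
    DeformedAlgebra.constantCoeff.mapMatrix (idempotentIterate D e N) = e := by
  induction N with
  | zero => ext i j; rfl
  | succ N ih =>
    simp only [idempotentIterate, map_sub, map_mul, map_pow, ih, map_ofNat, he.pow_succ_eq]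
    noncomm_ring

theorem vanishesBelow_idempotentIterate_sq_sub (he : IsIdempotentElem e) (N : ℕ) :
    VanishesBelow (2 ^ N) (idempotentIterate D e N ^ 2 - idempotentIterate D e N) := by
  induction N with
  | zero =>
    intro i j n hn
    obtain rfl : n = 0 := by omega
    show DeformedAlgebra.constantCoeff.mapMatrix
      (idempotentIterate D e 0 ^ 2 - idempotentIterate D e 0) i j = 0
    rw [map_sub, map_pow, constantCoeff_idempotentIterate he, sq, he.eq, sub_self]
    rfl
  | succ N ih =>
    have key : idempotentIterate D e (N + 1) ^ 2 - idempotentIterate D e (N + 1) =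
        (idempotentIterate D e N ^ 2 - idempotentIterate D e N) *
          ((idempotentIterate D e N ^ 2 - idempotentIterate D e N) *
            ((1 - 2 * idempotentIterate D e N) ^ 2 - 4)) := by
      simp only [idempotentIterate]
      noncomm_ring
    rw [key, pow_succ, mul_two]
    exact ih.mul (ih.mul_right _)

theorem vanishesBelow_idempotentIterate_succ_sub (he : IsIdempotentElem e) (N : ℕ) :
    VanishesBelow (2 ^ N) (idempotentIterate D e (N + 1) - idempotentIterate D e N) := by
  have key : idempotentIterate D e (N + 1) - idempotentIterate D e N =
      (idempotentIterate D e N ^ 2 - idempotentIterate D e N) *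
        (1 - 2 * idempotentIterate D e N) := by
    simp only [idempotentIterate]
    noncomm_ring
  rw [key]
  exact (vanishesBelow_idempotentIterate_sq_sub he N).mul_right _

theorem idempotentIterate_apply_of_le (he : IsIdempotentElem e) {N M : ℕ} (h : N ≤ M) {n : ℕ}
    (hn : n < 2 ^ N) (i j : ι) : idempotentIterate D e M i j n = idempotentIterate D e N i j n := by
  induction M, h using Nat.le_induction with
  | base => rfl
  | succ M hM ih =>
    rw [← ih, ← sub_eq_zero]
    exact vanishesBelow_idempotentIterate_succ_sub he M i j n
      (hn.trans_le (Nat.pow_le_pow_right two_pos hM))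

variable (D) in
/-- The `λ`-adic limit of `idempotentIterate`: its order-`n` coefficients are those of the
`n`-th iterate, which are already stable. -/
def liftIdempotent (e : Matrix ι ι A) : Matrix ι ι D.DeformedAlgebra :=
  Matrix.of fun i j => (fun n => idempotentIterate D e n i j n : D.DeformedAlgebra)

theorem liftIdempotent_apply_of_lt (he : IsIdempotentElem e) {N n : ℕ} (hn : n < 2 ^ N)
    (i j : ι) : liftIdempotent D e i j n = idempotentIterate D e N i j n := by
  rcases le_total N n with h | h
  · exact idempotentIterate_apply_of_le he h hn i j
  · exact (idempotentIterate_apply_of_le he h n.lt_two_pow_self i j).symm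

theorem isIdempotentElem_liftIdempotent (he : IsIdempotentElem e) :
    IsIdempotentElem (liftIdempotent D e) := by
  ext i j : 2
  funext n
  have agree : ∀ s t, ∀ l ≤ n, liftIdempotent D e s t l = idempotentIterate D e n s t l :=
    fun s t l hl => liftIdempotent_apply_of_lt he (hl.trans_lt n.lt_two_pow_self) s t
  have defect := vanishesBelow_idempotentIterate_sq_sub (D := D) he n i j n n.lt_two_pow_self
  calc (liftIdempotent D e * liftIdempotent D e) i j n
      = (idempotentIterate D e n * idempotentIterate D e n) i j n := by
        simp only [Matrix.mul_apply, DeformedAlgebra.sum_apply]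
        exact Finset.sum_congr rfl fun s _ =>
          DeformedAlgebra.mul_apply_congr (agree i s) (agree s j)
    _ = idempotentIterate D e n i j n := by
        rwa [sq, Matrix.sub_apply, DeformedAlgebra.sub_apply, sub_eq_zero] at defect
    _ = liftIdempotent D e i j n := (agree i j n le_rfl).symm

end Iterate

end FormalDeformation

/-- A right `A`-module structure on the `k`-module `E`, made finitely generated projective
by a finite dual basis `(ξ i, f i)`. -/
structure FGProjRightModule (k A E : Type*) [CommRing k] [Ring A] [Algebra k A]
    [AddCommGroup E] [Module k E] where
  ract : E → A → E
  ract_add_left : ∀ x y a, ract (x + y) a = ract x a + ract y a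
  ract_add_right : ∀ x a b, ract x (a + b) = ract x a + ract x b
  ract_smul_left : ∀ (c : k) x a, ract (c • x) a = c • ract x a
  ract_smul_right : ∀ (c : k) x a, ract x (c • a) = c • ract x a
  ract_one : ∀ x, ract x 1 = x
  ract_mul : ∀ x a b, ract x (a * b) = ract (ract x a) b
  m : ℕ
  ξ : Fin m → E
  f : Fin m → E → A
  f_add : ∀ i x y, f i (x + y) = f i x + f i y
  f_lin : ∀ i x a, f i (ract x a) = f i x * a
  f_dual : ∀ x, ∑ i, ract (ξ i) (f i x) = x

noncomputable section

namespace FGProjRightModule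

variable {k A E : Type*} [CommRing k] [Ring A] [Algebra k A] [AddCommGroup E] [Module k E]
  (S : FGProjRightModule k A E)

def ractₗ : E →ₗ[k] A →ₗ[k] E :=
  LinearMap.mk₂ k S.ract S.ract_add_left S.ract_smul_left S.ract_add_right S.ract_smul_right

@[simp]
theorem ractₗ_apply (x : E) (a : A) : S.ractₗ x a = S.ract x a :=
  rfl

theorem f_smul (i : Fin S.m) (c : k) (x : E) : S.f i (c • x) = c • S.f i x := by
  have : c • x = S.ract x (c • 1) := by rw [S.ract_smul_right, S.ract_one]
  rw [this, S.f_lin, mul_smul_comm, mul_one]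

def coord (i : Fin S.m) : E →ₗ[k] A where
  toFun := S.f i
  map_add' := S.f_add i
  map_smul' := S.f_smul i

@[simp]
theorem coord_apply (i : Fin S.m) (x : E) : S.coord i x = S.f i x :=
  rfl

/-- The idempotent exhibiting `E` as a direct summand of `A^m`. -/
def idem : Matrix (Fin S.m) (Fin S.m) A :=
  Matrix.of fun i j => S.f i (S.ξ j)

theorem f_sum_ract (i : Fin S.m) (a : Fin S.m → A) :
    S.f i (∑ s, S.ract (S.ξ s) (a s)) = ∑ s, S.idem i s * a s := by
  change S.coord i _ = _
  rw [map_sum]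
  exact Finset.sum_congr rfl fun s _ => S.f_lin i _ _

theorem isIdempotentElem_idem : IsIdempotentElem S.idem := by
  ext i j
  rw [Matrix.mul_apply, ← S.f_sum_ract]
  exact congrArg (S.f i) (S.f_dual (S.ξ j))

variable (D : FormalDeformation k A)

open FormalDeformation MulOpposite

def deformedIdem : Matrix (Fin S.m) (Fin S.m) D.DeformedAlgebra :=
  liftIdempotent D S.idem

theorem isIdempotentElem_deformedIdem : IsIdempotentElem (S.deformedIdem D) :=
  isIdempotentElem_liftIdempotent S.isIdempotentElem_idem

theorem deformedIdem_apply_zero (i j : Fin S.m) : S.deformedIdem D i j 0 = S.idem i j :=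
  rfl

def coordSeries (x : ℕ → E) (i : Fin S.m) : D.DeformedAlgebra := fun n => S.f i (x n)

/-- Identifies `E[[λ]]` with the summand `ê qA^m` of `qA^m`, with inverse `ofFree`. -/
def toFree : (ℕ → E) →+ Fin S.m → D.DeformedAlgebra where
  toFun x := S.deformedIdem D *ᵥ S.coordSeries D x
  map_zero' := by
    rw [show S.coordSeries D 0 = 0 from funext fun i => funext fun _ => map_zero (S.coord i),
      Matrix.mulVec_zero]
  map_add' x y := by
    rw [← Matrix.mulVec_add]
    exact congrArg _ (funext fun i => funext fun _ => S.f_add i _ _)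

theorem toFree_def (x : ℕ → E) :
    S.toFree D x = S.deformedIdem D *ᵥ S.coordSeries D x :=
  rfl

def toFreeCoeff (d : ℕ) (i : Fin S.m) : E →ₗ[k] A :=
  ∑ s, (∑ p ∈ antidiagonal d, D.C p.1 (S.deformedIdem D i s p.2)) ∘ₗ S.coord s

theorem toFree_apply (x : ℕ → E) (i : Fin S.m) :
    S.toFree D x i = fdMap (fun d => S.toFreeCoeff D d i) x := by
  have h : ∀ s, S.deformedIdem D i s * S.coordSeries D x s =
      fdMap (fun d => ⇑((∑ p ∈ antidiagonal d, D.C p.1 (S.deformedIdem D i s p.2)) ∘ₗ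
        S.coord s)) x :=
    fun s => fdConv_eq_fdMap (fun r => D.C r) _ _
  change ∑ s, S.deformedIdem D i s * S.coordSeries D x s = _
  exact (Finset.sum_congr rfl fun s _ => h s).trans (sum_fdMap _ _ x)

def proj : (Fin S.m → D.DeformedAlgebra) →+ ℕ → E where
  toFun u n := ∑ i, S.ractₗ (S.ξ i) (u i n)
  map_zero' := funext fun _ => Finset.sum_eq_zero fun _ _ => map_zero _
  map_add' u v := funext fun n => by
    simp only [Pi.add_apply, DeformedAlgebra.add_apply, map_add, Finset.sum_add_distrib]

theorem toFreeCoeff_zero (i : Fin S.m) : S.toFreeCoeff D 0 i = S.coord i := by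
  ext w
  simp only [toFreeCoeff, Finset.Nat.antidiagonal_zero, Finset.sum_singleton, LinearMap.coe_sum,
    Finset.sum_apply, LinearMap.comp_apply, D.C_zero, deformedIdem_apply_zero]
  exact (S.f_sum_ract i _).symm.trans (congrArg (S.f i) (S.f_dual w))

def gauge : PowerSeries (Module.End k E) :=
  PowerSeries.mk fun d => ∑ i, S.ractₗ (S.ξ i) ∘ₗ S.toFreeCoeff D d i

theorem proj_toFree (x : ℕ → E) :
    S.proj D (S.toFree D x) = fdMap (fun d => ⇑(PowerSeries.coeff d (S.gauge D))) x := by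
  simp only [gauge, PowerSeries.coeff_mk]
  exact (congrArg _ (funext fun i => S.toFree_apply D x i)).trans
    (sum_fdMap_apply Finset.univ (fun i => S.ractₗ (S.ξ i)) (fun i d => S.toFreeCoeff D d i) x)

theorem constantCoeff_gauge : PowerSeries.constantCoeff (S.gauge D) = ↑(1 : (Module.End k E)ˣ) := by
  ext w
  simpa [gauge, toFreeCoeff_zero] using S.f_dual w

def gaugeInv : PowerSeries (Module.End k E) :=
  PowerSeries.invOfUnit (S.gauge D) 1

def ofFree : (Fin S.m → D.DeformedAlgebra) →+ ℕ → E where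
  toFun u := fdMap (fun d => ⇑(PowerSeries.coeff d (S.gaugeInv D))) (S.proj D u)
  map_zero' := funext fun _ => by simp [fdMap]
  map_add' u v := by simp only [map_add, fdMap_add]

theorem ofFree_def (u : Fin S.m → D.DeformedAlgebra) :
    S.ofFree D u = fdMap (fun d => ⇑(PowerSeries.coeff d (S.gaugeInv D))) (S.proj D u) :=
  rfl

theorem ofFree_toFree (x : ℕ → E) : S.ofFree D (S.toFree D x) = x := by
  rw [ofFree_def, proj_toFree, ← fdMap_coeff_mul, gaugeInv,
    PowerSeries.invOfUnit_mul _ _ (S.constantCoeff_gauge D), fdMap_coeff_one]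

theorem proj_toFree_ofFree (u : Fin S.m → D.DeformedAlgebra) :
    S.proj D (S.toFree D (S.ofFree D u)) = S.proj D u := by
  rw [proj_toFree, ofFree_def, ← fdMap_coeff_mul, gaugeInv,
    PowerSeries.mul_invOfUnit _ _ (S.constantCoeff_gauge D), fdMap_coeff_one]

theorem mulVec_toFree (x : ℕ → E) : S.deformedIdem D *ᵥ S.toFree D x = S.toFree D x := by
  rw [toFree_def, Matrix.mulVec_mulVec, (S.isIdempotentElem_deformedIdem D).eq]

/-- Order by order, `ê u = u` and `proj u = 0` force the leading coefficient `e u(n) = u(n)`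
to vanish. -/
theorem eq_zero_of_proj_eq_zero {u : Fin S.m → D.DeformedAlgebra}
    (hu : S.deformedIdem D *ᵥ u = u) (h : S.proj D u = 0) : u = 0 := by
  suffices ∀ n i, u i n = 0 from funext fun i => funext fun n => this n i
  intro n
  induction n using Nat.strong_induction_on with
  | _ n ih =>
    intro i
    calc u i n = (S.deformedIdem D *ᵥ u) i n := by rw [hu]
      _ = ∑ s, S.idem i s * u s n := by
        change (∑ s, S.deformedIdem D i s * u s) n = _
        rw [DeformedAlgebra.sum_apply]
        refine Finset.sum_congr rfl fun s _ => ?_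
        rw [DeformedAlgebra.mul_apply_of_forall_lt_eq_zero _ fun l hl => ih l hl s,
          deformedIdem_apply_zero]
      _ = S.f i (S.proj D u n) := (S.f_sum_ract i _).symm
      _ = 0 := by rw [h]; exact map_zero (S.coord i)

theorem toFree_ofFree {u : Fin S.m → D.DeformedAlgebra} (hu : S.deformedIdem D *ᵥ u = u) :
    S.toFree D (S.ofFree D u) = u := by
  rw [← sub_eq_zero]
  refine S.eq_zero_of_proj_eq_zero D ?_ ?_
  · rw [Matrix.mulVec_sub, mulVec_toFree, hu]
  · rw [map_sub, proj_toFree_ofFree, sub_self]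


def actionCoeff (d : ℕ) : E →ₗ[k] A →ₗ[k] E :=
  ∑ i, (∑ p ∈ antidiagonal d, (D.C p.1).comp (S.toFreeCoeff D p.2 i)).compr₂ (S.ractₗ (S.ξ i))

theorem proj_op_smul_toFree (x : ℕ → E) (a : D.DeformedAlgebra) :
    S.proj D (op a • S.toFree D x) = fdConv (fun r u v => S.actionCoeff D r u v) x a := by
  have h : ∀ i, (op a • S.toFree D x) i =
      fdConv (fun d u v => (∑ p ∈ antidiagonal d, (D.C p.1).comp (S.toFreeCoeff D p.2 i)) u v)
        x a := fun i => by
    rw [Pi.smul_apply, op_smul_eq_mul, toFree_apply]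
    exact fdConv_fdMap_left (fun r => D.C r) (fun d => S.toFreeCoeff D d i) x a
  exact (congrArg _ (funext h)).trans
    (sum_fdConv_apply Finset.univ (fun i => S.ractₗ (S.ξ i)) _ x a)

def deformedAction (r : ℕ) : E →ₗ[k] A →ₗ[k] E :=
  ∑ p ∈ antidiagonal r, (S.actionCoeff D p.2).compr₂ (PowerSeries.coeff p.1 (S.gaugeInv D))

theorem fdConv_deformedAction (x : ℕ → E) (a : D.DeformedAlgebra) :
    fdConv (fun r u v => S.deformedAction D r u v) x a = S.ofFree D (op a • S.toFree D x) := by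
  rw [ofFree_def, proj_op_smul_toFree]
  exact (fdMap_fdConv (fun d => PowerSeries.coeff d (S.gaugeInv D)) (S.actionCoeff D) x a).symm

theorem deformedAction_zero (w : E) (b : A) : S.deformedAction D 0 w b = S.ract w b := by
  simp only [deformedAction, actionCoeff, Finset.Nat.antidiagonal_zero, Finset.sum_singleton,
    LinearMap.compr₂_apply, LinearMap.sum_apply, LinearMap.comp_apply, toFreeCoeff_zero, D.C_zero,
    gaugeInv,
    PowerSeries.coeff_zero_eq_constantCoeff_apply, PowerSeries.constantCoeff_invOfUnit]
  simp only [inv_one, Units.val_one, Module.End.one_apply, ractₗ_apply, coord_apply, S.ract_mul]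
  exact (map_sum (S.ractₗ.flip b) _ _).symm.trans (congrArg (S.ract · b) (S.f_dual w))

theorem toFree_fdConv_deformedAction (x : ℕ → E) (a : D.DeformedAlgebra) :
    S.toFree D (fdConv (fun r u v => S.deformedAction D r u v) x a) = op a • S.toFree D x := by
  rw [fdConv_deformedAction, toFree_ofFree]
  rw [Matrix.mulVec_smul, mulVec_toFree]

theorem fdConv_deformedAction_one (x : ℕ → E) :
    fdConv (fun r u v => S.deformedAction D r u v) x (1 : D.DeformedAlgebra) = x := by
  rw [fdConv_deformedAction, op_one, one_smul, ofFree_toFree]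

theorem fdConv_deformedAction_mul (x : ℕ → E) (a b : D.DeformedAlgebra) :
    fdConv (fun r u v => S.deformedAction D r u v)
        (fdConv (fun r u v => S.deformedAction D r u v) x a) b =
      fdConv (fun r u v => S.deformedAction D r u v) x (a * b) := by
  rw [fdConv_deformedAction, toFree_fdConv_deformedAction, smul_smul, ← op_mul,
    ← fdConv_deformedAction]

def basis (i : Fin S.m) : ℕ → E :=
  S.ofFree D fun j => S.deformedIdem D j i

theorem toFree_basis (i : Fin S.m) : S.toFree D (S.basis D i) = fun j => S.deformedIdem D j i := by
  refine S.toFree_ofFree D (funext fun j => ?_)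
  change ∑ s, S.deformedIdem D j s * S.deformedIdem D s i = _
  rw [← Matrix.mul_apply, (S.isIdempotentElem_deformedIdem D).eq]

theorem sum_fdConv_deformedAction_basis (x : ℕ → E) :
    ∑ i, fdConv (fun r u v => S.deformedAction D r u v) (S.basis D i) (S.toFree D x i) = x := by
  simp only [fdConv_deformedAction, toFree_basis]
  rw [← map_sum]
  have : ∑ i : Fin S.m, op (S.toFree D x i) • (fun j => S.deformedIdem D j i) =
      S.deformedIdem D *ᵥ S.toFree D x := by
    funext j
    simp [Matrix.mulVec, dotProduct, Finset.sum_apply]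
  rw [this, mulVec_toFree, ofFree_toFree]

end FGProjRightModule

end

/-- Proposition 2.7, existence part. Every finitely generated
projective right `A`-module `E` (given via a dual basis) admits a deformation
corresponding to `qA`, which is finitely generated and projective over `qA`
(expressed by a dual basis over `qA`). -/
theorem fgp_module_deformation_exists {k A E : Type*} [CommRing k] [Ring A]
    [Algebra k A] [AddCommGroup E] [Module k E]
    (D : FormalDeformation k A)
    -- the right A-module structure on E
    (ract : E → A → E)
    (ract_add_left : ∀ x y a, ract (x + y) a = ract x a + ract y a)
    (ract_add_right : ∀ x a b, ract x (a + b) = ract x a + ract x b)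
    (ract_smul_left : ∀ (c : k) x a, ract (c • x) a = c • ract x a)
    (ract_smul_right : ∀ (c : k) x a, ract x (c • a) = c • ract x a)
    (ract_one : ∀ x, ract x 1 = x)
    (ract_mul : ∀ x a b, ract x (a * b) = ract (ract x a) b)
    -- E is finitely generated projective: a finite dual basis
    (m : ℕ) (ξ : Fin m → E) (f : Fin m → E → A)
    (f_add : ∀ i x y, f i (x + y) = f i x + f i y)
    (f_lin : ∀ i x a, f i (ract x a) = f i x * a)
    (f_dual : ∀ x, ∑ i, ract (ξ i) (f i x) = x) :
    ∃ R : ℕ → E → A → E,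
      -- R deforms the original action by k-bilinear cochains
      (∀ x a, R 0 x a = ract x a) ∧
      (∀ r x y a, R r (x + y) a = R r x a + R r y a) ∧
      (∀ r x a b, R r x (a + b) = R r x a + R r x b) ∧
      (∀ r (c : k) x a, R r (c • x) a = c • R r x a) ∧
      (∀ r (c : k) x a, R r x (c • a) = c • R r x a) ∧
      -- (E[[λ]], •) is a unital right qA-module
      (∀ x : ℕ → E, fdConv R x (fdOne A) = x) ∧
      (∀ (x : ℕ → E) (a b : ℕ → A),
        fdConv R (fdConv R x a) b = fdConv R x (D.mul a b)) ∧
      -- (E[[λ]], •) is finitely generated projective over qA: a dual basis over qA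
      (∃ (m' : ℕ) (ξ' : Fin m' → ℕ → E) (g : Fin m' → (ℕ → E) → ℕ → A),
        (∀ i x y, g i (x + y) = g i x + g i y) ∧
        (∀ i (x : ℕ → E) (a : ℕ → A), g i (fdConv R x a) = D.mul (g i x) a) ∧
        (∀ x : ℕ → E, ∑ i, fdConv R (ξ' i) (g i x) = x)) := by
  let S : FGProjRightModule k A E := ⟨ract, ract_add_left, ract_add_right, ract_smul_left,
    ract_smul_right, ract_one, ract_mul, m, ξ, f, f_add, f_lin, f_dual⟩
  refine ⟨fun r x a => S.deformedAction D r x a, S.deformedAction_zero D,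
    fun r => (S.deformedAction D r).map_add₂, fun r x => map_add (S.deformedAction D r x),
    fun r => (S.deformedAction D r).map_smul₂, fun r c x => map_smul (S.deformedAction D r x) c,
    S.fdConv_deformedAction_one D, S.fdConv_deformedAction_mul D,
    S.m, S.basis D, fun i x => S.toFree D x i, fun i x y => congrFun (map_add (S.toFree D) x y) i,
    fun i x a => congrFun (S.toFree_fdConv_deformedAction D x a) i,
    S.sum_fdConv_deformedAction_basis D⟩
end

section
/- Let C be a commutative star ring in which 2 is invertible, A a unital *-algebra over C, P_0 ∈ M_n(A) a projection (P_0² = P_0 = P_0*), E = P_0 A^n the right A-module of column vectors x ∈ A^n with P_0 x = x, and h_0(x,y) = Σ_{i=1}^n x_i* y_i its canonical A-valued inner product. Let qA = (A[[λ]], ⋆) be a Hermitian formal deformation of A. Then there exists a Hermitian deformation of (E, h_0): a deformation (E[[λ]], •) of the right A-module E corresponding to qA together with C-sesquilinear maps h_r : E × E → A for r ≥ 1 such that h = h_0 + Σ_{r≥1} h_r λ^r (extended C[[λ]]-sesquilinearly to E[[λ]]) satisfies h(x,y)* = h(y,x) and h(x, y • a) = h(x,y) ⋆ a for all x, y ∈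 E[[λ]], a ∈ A[[λ]], and for every x ∈ E[[λ]] the element h(x,x) is a sum of n elements of the form b* ⋆ b with b ∈ A[[λ]] (hence algebraically positive). -/
open scoped Matrix

/-- A Hermitian deformation `(E[[λ]], •, h)` of the inner-product right `A`-module
`E = P₀Aⁿ` (with its canonical `A`-valued inner product `h₀(x,y) = ∑ᵢ xᵢ* yᵢ`)
corresponding to a Hermitian deformation `qA = (A[[λ]], ⋆)`:  `C`-bilinear cochains
`R r : E × A → E` with `R 0` the original action, making `E[[λ]]` a unital right
`qA`-module, together with `C`-sesquilinear cochains `h r : E × E → A` with `h 0 = h₀`,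
whose extension to `E[[λ]]` is Hermitian-symmetric and `qA`-linear in the second
argument.  (Membership in `E = P₀Aⁿ` is expressed by `P₀.mulVec x = x`.) -/
structure HermitianDeformedModule {C A : Type*} [CommRing C] [StarRing C]
    [Ring A] [Algebra C A] [StarRing A] [StarModule C A]
    {n : ℕ} (D : FormalDeformation C A) (P₀ : Matrix (Fin n) (Fin n) A) where
  R : ℕ → (Fin n → A) → A → Fin n → A
  h : ℕ → (Fin n → A) → (Fin n → A) → A
  R_zero : ∀ x a, P₀.mulVec x = x → R 0 x a = fun i => x i * a
  R_mem : ∀ r x a, P₀.mulVec x = x → P₀.mulVec (R r x a) = R r x a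
  R_add_left : ∀ r x x' a, P₀.mulVec x = x → P₀.mulVec x' = x' →
    R r (x + x') a = R r x a + R r x' a
  R_add_right : ∀ r x a a', P₀.mulVec x = x → R r x (a + a') = R r x a + R r x a'
  R_smul_left : ∀ r (c : C) x a, P₀.mulVec x = x → R r (c • x) a = c • R r x a
  R_smul_right : ∀ r (c : C) x a, P₀.mulVec x = x → R r x (c • a) = c • R r x a
  act_one : ∀ x : ℕ → Fin n → A, (∀ m, P₀.mulVec (x m) = x m) →
    fdConv R x (fdOne A) = x
  act_assoc : ∀ (x : ℕ → Fin n → A) (a b : ℕ → A), (∀ m, P₀.mulVec (x m) = x m) →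
    fdConv R (fdConv R x a) b = fdConv R x (D.mul a b)
  h_zero : ∀ x y, P₀.mulVec x = x → P₀.mulVec y = y →
    h 0 x y = ∑ i, star (x i) * y i
  h_add_left : ∀ r x x' y, P₀.mulVec x = x → P₀.mulVec x' = x' → P₀.mulVec y = y →
    h r (x + x') y = h r x y + h r x' y
  h_add_right : ∀ r x y y', P₀.mulVec x = x → P₀.mulVec y = y → P₀.mulVec y' = y' →
    h r x (y + y') = h r x y + h r x y'
  h_smul_left : ∀ r (c : C) x y, P₀.mulVec x = x → P₀.mulVec y = y →
    h r (c • x) y = star c • h r x y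
  h_smul_right : ∀ r (c : C) x y, P₀.mulVec x = x → P₀.mulVec y = y →
    h r x (c • y) = c • h r x y
  h_herm : ∀ x y : ℕ → Fin n → A, (∀ m, P₀.mulVec (x m) = x m) →
    (∀ m, P₀.mulVec (y m) = y m) → fdStar (fdConv h x y) = fdConv h y x
  h_mod : ∀ (x y : ℕ → Fin n → A) (a : ℕ → A), (∀ m, P₀.mulVec (x m) = x m) →
    (∀ m, P₀.mulVec (y m) = y m) →
    fdConv h x (fdConv R y a) = D.mul (fdConv h x y) a

/-!
Newton's iteration `e ↦ 3e² - 2e³` lifts the projection `P₀` to an idempotent `P` of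
`Mₙ(qA)`. The map `x ↦ P ⋆ x` identifies `E[[λ]]` with the projective `qA`-module `P ⋆ qA^n`:
followed by the classical projection `P₀` it is the identity plus a strictly causal
perturbation, hence invertible order by order. Transporting the right action of `qA` and the
inner product `(y, z) ↦ ∑ᵢ yᵢ* ⋆ zᵢ` of `P ⋆ qA^n` along this isomorphism gives the
deformation, and `h(x, x) = ∑ᵢ (P ⋆ x)ᵢ* ⋆ (P ⋆ x)ᵢ` by construction. Both operations are
`C[[λ]]`-bilinear and `λ`-adically continuous, so they are the convolutions of their cochains
`R_r` and `h_r`.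
-/

/-! ### Causal maps of formal series -/

section Sequences

variable {M N : Type*}

/-- Multiplication by `λ` on formal series. -/
def fdShift [Zero M] (x : ℕ → M) : ℕ → M
  | 0 => 0
  | t + 1 => x t

@[simp] lemma fdShift_zero_apply [Zero M] (x : ℕ → M) : fdShift x 0 = 0 := rfl

@[simp] lemma fdShift_succ_apply [Zero M] (x : ℕ → M) (t : ℕ) : fdShift x (t + 1) = x t := rfl

lemma fdShift_add [AddZeroClass M] (x y : ℕ → M) : fdShift (x + y) = fdShift x + fdShift y := by
  funext t; cases t <;> simp

lemma fdShift_sub [AddGroup M] (x y : ℕ → M) : fdShift (x - y) = fdShift x - fdShift y := by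
  funext t; cases t <;> simp

lemma fdShift_iterate_single [Zero M] (p : ℕ) (a : M) :
    fdShift^[p] (Pi.single 0 a) = Pi.single p a := by
  induction p with
  | zero => rfl
  | succ p ih =>
    rw [Function.iterate_succ_apply', ih]
    funext t
    cases t <;> simp [Pi.single_apply]

lemma fdC_eq_single [Zero M] (a : M) : fdC a = Pi.single 0 a := by
  funext t; simp [fdC, Pi.single_apply]

@[simp] lemma fdC_apply_zero [Zero M] (a : M) : fdC a 0 = a := rfl

lemma fdC_add [AddZeroClass M] (a b : M) : fdC (a + b) = fdC a + fdC b := by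
  simp only [fdC_eq_single, Pi.single_add]

lemma fdC_smul {R : Type*} [Zero M] [SMulZeroClass R M] (c : R) (a : M) :
    fdC (c • a) = c • fdC a := by
  funext t; by_cases ht : t = 0 <;> simp [fdC, ht]

lemma sum_range_fdShift_iterate_fdC_apply [AddCommMonoid M] (z : ℕ → M) {m t : ℕ}
    (ht : t ≤ m) : (∑ p ∈ Finset.range (m + 1), fdShift^[p] (fdC (z p))) t = z t := by
  simp [fdC_eq_single, fdShift_iterate_single, Finset.sum_apply, Finset.sum_pi_single,
    Nat.lt_succ_of_le ht]

def IsStrictlyCausal (U : (ℕ → M) → ℕ → N) : Prop :=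
  ∀ ⦃x y : ℕ → M⦄ ⦃m : ℕ⦄, (∀ t < m, x t = y t) → U x m = U y m

variable [AddGroup M] {U : (ℕ → M) → ℕ → M}

lemma IsStrictlyCausal.eq_of_add_eq (hU : IsStrictlyCausal U) {x y : ℕ → M} {m : ℕ}
    (h : ∀ t < m, x t + U x t = y t + U y t) : ∀ t < m, x t = y t := by
  intro t
  induction t using Nat.strong_induction_on with
  | _ t ih =>
    intro ht
    have hUt : U x t = U y t := hU fun s hs => ih s hs (hs.trans ht)
    simpa [hUt] using h t ht

lemma IsStrictlyCausal.injective_add (hU : IsStrictlyCausal U) :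
    Function.Injective fun x => x + U x := fun _ _ h =>
  funext fun t => hU.eq_of_add_eq (m := t + 1) (fun s _ => congrFun h s) t t.lt_succ_self

/-- The solution of `x + U x = y` is the limit of the iterates of `x ↦ y - U x`, which
stabilise one coefficient at a time. -/
lemma IsStrictlyCausal.surjective_add (hU : IsStrictlyCausal U) :
    Function.Surjective fun x => x + U x := by
  intro y
  set G : (ℕ → M) → ℕ → M := fun x => y - U x
  have hstep : ∀ k, ∀ t < k, G^[k + 1] 0 t = G^[k] 0 t := by
    intro k
    induction k with
    | zero => simp
    | succ k ih =>
      intro t ht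
      rw [Function.iterate_succ_apply', Function.iterate_succ_apply' G k]
      refine congrArg (y t - ·) (hU fun s hs => ?_)
      rw [← Function.iterate_succ_apply' G k]
      exact ih s (by omega)
  have hstable : ∀ k l, k ≤ l → ∀ t < k, G^[l] 0 t = G^[k] 0 t := by
    intro k l hkl
    induction l, hkl using Nat.le_induction with
    | base => simp
    | succ l hkl ih => exact fun t ht => (hstep l t (by omega)).trans (ih t ht)
  refine ⟨fun t => G^[t + 1] 0 t, funext fun t => ?_⟩
  have hUt : U (fun s => G^[s + 1] 0 s) t = U (G^[t] 0) t :=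
    hU fun s hs => (hstable (s + 1) t hs s s.lt_succ_self).symm
  simp only [Pi.add_apply, hUt, Function.iterate_succ_apply' G t, G, Pi.sub_apply,
    sub_add_cancel]

lemma IsStrictlyCausal.bijective_add (hU : IsStrictlyCausal U) :
    Function.Bijective fun x => x + U x :=
  ⟨hU.injective_add, hU.surjective_add⟩

end Sequences

/-! ### Series-bilinear maps -/

section Convolution

variable {M N P : Type*} [AddCommMonoid M] [AddCommMonoid N] [AddCommGroup P]

/-- The maps `fdConv B` with `B` biadditive are exactly these (`IsSeriesBilinear.fdConv_eq`). -/
structure IsSeriesBilinear (F : (ℕ → M) → (ℕ → N) → ℕ → P) : Prop where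
  map_add_left : ∀ x x' y, F (x + x') y = F x y + F x' y
  map_add_right : ∀ x y y', F x (y + y') = F x y + F x y'
  map_shift_left : ∀ x y, F (fdShift x) y = fdShift (F x y)
  map_shift_right : ∀ x y, F x (fdShift y) = fdShift (F x y)
  causal : ∀ m x x' y y', (∀ t ≤ m, x t = x' t) → (∀ t ≤ m, y t = y' t) →
    F x y m = F x' y' m

namespace IsSeriesBilinear

variable {F G : (ℕ → M) → (ℕ → N) → ℕ → P}

lemma map_zero_left (hF : IsSeriesBilinear F) (y : ℕ → N) : F 0 y = 0 := by
  simpa using hF.map_add_left 0 0 y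

lemma map_zero_right (hF : IsSeriesBilinear F) (x : ℕ → M) : F x 0 = 0 := by
  simpa using hF.map_add_right x 0 0

lemma map_sum_left (hF : IsSeriesBilinear F) {ι : Type*} (s : Finset ι) (x : ι → ℕ → M)
    (y : ℕ → N) : F (∑ i ∈ s, x i) y = ∑ i ∈ s, F (x i) y :=
  map_sum (AddMonoidHom.mk' (F · y) fun x x' => hF.map_add_left x x' y) x s

lemma map_sum_right (hF : IsSeriesBilinear F) {ι : Type*} (s : Finset ι) (x : ℕ → M)
    (y : ι → ℕ → N) : F x (∑ i ∈ s, y i) = ∑ i ∈ s, F x (y i) :=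
  map_sum (AddMonoidHom.mk' (F x) (hF.map_add_right x)) y s

lemma map_shift_iterate (hF : IsSeriesBilinear F) (p q : ℕ) (x : ℕ → M) (y : ℕ → N) :
    F (fdShift^[p] x) (fdShift^[q] y) = fdShift^[p + q] (F x y) := by
  have hleft : ∀ p x,
      F (fdShift^[p] x) (fdShift^[q] y) = fdShift^[p] (F x (fdShift^[q] y)) := by
    intro p
    induction p with
    | zero => simp
    | succ p ih => intro x; rw [Function.iterate_succ_apply', hF.map_shift_left, ih,
        ← Function.iterate_succ_apply' fdShift]
  have hright : ∀ q y, F x (fdShift^[q] y) = fdShift^[q] (F x y) := by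
    intro q
    induction q with
    | zero => simp
    | succ q ih => intro y; rw [Function.iterate_succ_apply', hF.map_shift_right, ih,
        ← Function.iterate_succ_apply' fdShift]
  rw [hleft, hright, Function.iterate_add_apply]

/-- Up to order `m`, `x` agrees with the polynomial `∑_{p ≤ m} x_p λ^p`. -/
theorem ext (hF : IsSeriesBilinear F) (hG : IsSeriesBilinear G)
    (h : ∀ u v, F (fdC u) (fdC v) = G (fdC u) (fdC v)) : F = G := by
  funext x y m
  have hx t (ht : t ≤ m) := (sum_range_fdShift_iterate_fdC_apply x ht).symm
  have hy t (ht : t ≤ m) := (sum_range_fdShift_iterate_fdC_apply y ht).symm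
  rw [hF.causal m _ _ _ _ hx hy, hG.causal m _ _ _ _ hx hy]
  simp only [hF.map_sum_left, hF.map_sum_right, hG.map_sum_left, hG.map_sum_right,
    hF.map_shift_iterate, hG.map_shift_iterate, h]

end IsSeriesBilinear

variable {B : ℕ → M → N → P}

lemma isSeriesBilinear_fdConv (hl : ∀ r u u' v, B r (u + u') v = B r u v + B r u' v)
    (hr : ∀ r u v v', B r u (v + v') = B r u v + B r u v') : IsSeriesBilinear (fdConv B) := by
  have hl0 : ∀ r v, B r 0 v = 0 := fun r v => by simpa using hl r 0 0 v
  have hr0 : ∀ r u, B r u 0 = 0 := fun r u => by simpa using hr r u 0 0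
  refine ⟨?_, ?_, ?_, ?_, ?_⟩
  · intro x x' y; funext m; simp [fdConv, hl, Finset.sum_add_distrib]
  · intro x y y'; funext m; simp [fdConv, hr, Finset.sum_add_distrib]
  · intro x y; funext m
    cases m with
    | zero => simp [fdConv, hl0]
    | succ m =>
      rw [fdConv, Finset.Nat.sum_antidiagonal_succ']
      simp [Finset.Nat.sum_antidiagonal_succ, hl0, fdConv]
  · intro x y; funext m
    cases m with
    | zero => simp [fdConv, hr0]
    | succ m =>
      rw [fdConv, Finset.Nat.sum_antidiagonal_succ']
      simp [Finset.Nat.sum_antidiagonal_succ', hr0, fdConv]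
  · intro m x x' y y' hx hy
    refine Finset.sum_congr rfl fun p hp => Finset.sum_congr rfl fun q hq => ?_
    rw [Finset.HasAntidiagonal.mem_antidiagonal] at hp hq
    rw [hx q.1 (by omega), hy q.2 (by omega)]

lemma fdConv_fdC_fdC (hl : ∀ r u u' v, B r (u + u') v = B r u v + B r u' v)
    (hr : ∀ r u v v', B r u (v + v') = B r u v + B r u v') (u : M) (v : N) :
    fdConv B (fdC u) (fdC v) = fun r => B r u v := by
  have hl0 : ∀ r v, B r 0 v = 0 := fun r v => by simpa using hl r 0 0 v
  have hr0 : ∀ r u, B r u 0 = 0 := fun r u => by simpa using hr r u 0 0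
  funext m
  rw [fdConv, Finset.sum_eq_single (m, 0)]
  · simp [fdC]
  · intro p hp hpm
    rw [Finset.HasAntidiagonal.mem_antidiagonal] at hp
    refine Finset.sum_eq_zero fun q hq => ?_
    rw [Finset.HasAntidiagonal.mem_antidiagonal] at hq
    rcases Nat.eq_zero_or_pos q.1 with h1 | h1
    · simp [fdC, hr0, show q.2 ≠ 0 by grind]
    · simp [fdC, hl0, h1.ne']
  · simp

theorem IsSeriesBilinear.fdConv_eq {F : (ℕ → M) → (ℕ → N) → ℕ → P}
    (hF : IsSeriesBilinear F) : fdConv (fun r u v => F (fdC u) (fdC v) r) = F := by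
  have hl : ∀ r u u' v,
      F (fdC (u + u')) (fdC v) r = F (fdC u) (fdC v) r + F (fdC u') (fdC v) r :=
    fun r u u' v => by rw [fdC_add, hF.map_add_left, Pi.add_apply]
  have hr : ∀ r u v v',
      F (fdC u) (fdC (v + v')) r = F (fdC u) (fdC v) r + F (fdC u) (fdC v') r :=
    fun r u v v' => by rw [fdC_add, hF.map_add_right, Pi.add_apply]
  exact (isSeriesBilinear_fdConv hl hr).ext hF fun u v => fdConv_fdC_fdC hl hr u v

end Convolution

section SeriesLinear

variable {M N P Q : Type*} [AddCommGroup M] [AddCommGroup N] [AddCommGroup P] [AddCommGroup Q]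

structure IsSeriesLinear (f : (ℕ → M) → ℕ → N) : Prop where
  map_add : ∀ x y, f (x + y) = f x + f y
  map_shift : ∀ x, f (fdShift x) = fdShift (f x)
  causal : ∀ m x y, (∀ t ≤ m, x t = y t) → f x m = f y m

namespace IsSeriesLinear

lemma id : IsSeriesLinear (id : (ℕ → M) → ℕ → M) :=
  ⟨fun _ _ => rfl, fun _ => rfl, fun m _ _ h => h m le_rfl⟩

lemma coeffwise (f : M →+ N) : IsSeriesLinear fun (x : ℕ → M) t => f (x t) where
  map_add x y := funext fun t => _root_.map_add f (x t) (y t)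
  map_shift x := funext fun t => by cases t <;> simp
  causal m x y h := by rw [h m le_rfl]

variable {f g : (ℕ → M) → ℕ → N}

lemma map_zero (hf : IsSeriesLinear f) : f 0 = 0 := by
  simpa using hf.map_add 0 0

lemma comp {h : (ℕ → N) → ℕ → P} (hh : IsSeriesLinear h) (hf : IsSeriesLinear f) :
    IsSeriesLinear (h ∘ f) where
  map_add x y := by simp only [Function.comp_apply, hf.map_add, hh.map_add]
  map_shift x := by simp only [Function.comp_apply, hf.map_shift, hh.map_shift]
  causal m x y hxy := hh.causal m _ _ fun t ht => hf.causal t x y fun s hs => hxy s (hs.trans ht)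

lemma add (hf : IsSeriesLinear f) (hg : IsSeriesLinear g) : IsSeriesLinear (f + g) where
  map_add x y := by simp only [Pi.add_apply, hf.map_add, hg.map_add]; abel
  map_shift x := by simp only [Pi.add_apply, hf.map_shift, hg.map_shift, fdShift_add]
  causal m x y hxy := by simp only [Pi.add_apply, hf.causal m x y hxy, hg.causal m x y hxy]

lemma sub (hf : IsSeriesLinear f) (hg : IsSeriesLinear g) : IsSeriesLinear (f - g) where
  map_add x y := by simp only [Pi.sub_apply, hf.map_add, hg.map_add]; abel
  map_shift x := by simp only [Pi.sub_apply, hf.map_shift, hg.map_shift, fdShift_sub]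
  causal m x y hxy := by simp only [Pi.sub_apply, hf.causal m x y hxy, hg.causal m x y hxy]

end IsSeriesLinear

lemma IsSeriesBilinear.comp {F : (ℕ → M) → (ℕ → N) → ℕ → P}
    (hF : IsSeriesBilinear F)
    {M' N' : Type*} [AddCommGroup M'] [AddCommGroup N'] {f : (ℕ → M') → ℕ → M}
    {g : (ℕ → N') → ℕ → N} {h : (ℕ → P) → ℕ → Q} (hh : IsSeriesLinear h)
    (hf : IsSeriesLinear f) (hg : IsSeriesLinear g) :
    IsSeriesBilinear fun x y => h (F (f x) (g y)) where
  map_add_left x x' y := by simp only [hf.map_add, hF.map_add_left, hh.map_add]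
  map_add_right x y y' := by simp only [hg.map_add, hF.map_add_right, hh.map_add]
  map_shift_left x y := by simp only [hf.map_shift, hF.map_shift_left, hh.map_shift]
  map_shift_right x y := by simp only [hg.map_shift, hF.map_shift_right, hh.map_shift]
  causal m x x' y y' hx hy := hh.causal m _ _ fun t ht =>
    hF.causal t _ _ _ _ (fun s hs => hf.causal s x x' fun r hr => hx r (hr.trans (hs.trans ht)))
      (fun s hs => hg.causal s y y' fun r hr => hy r (hr.trans (hs.trans ht)))

end SeriesLinear

/-! ### The deformed algebra -/

/-- The deformed algebra `qA = (A[[λ]], ⋆)`. -/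
def DeformedAlgebra {k A : Type*} [CommRing k] [Ring A] [Algebra k A]
    (_D : FormalDeformation k A) : Type _ :=
  ℕ → A

namespace DeformedAlgebra

variable {k A : Type*} [CommRing k] [Ring A] [Algebra k A] (D : FormalDeformation k A)

instance : AddCommGroup (DeformedAlgebra D) := Pi.addCommGroup

instance : Module k (DeformedAlgebra D) := Pi.module _ _ _

lemma isSeriesBilinear_mul : IsSeriesBilinear D.mul :=
  isSeriesBilinear_fdConv (by simp) (by simp)

instance : Ring (DeformedAlgebra D) :=
  { (inferInstance : AddCommGroup (DeformedAlgebra D)) with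
    mul := D.mul
    one := fdOne A
    mul_assoc := D.assoc
    one_mul := D.one_mul
    mul_one := D.mul_one
    left_distrib := (isSeriesBilinear_mul D).map_add_right
    right_distrib := (isSeriesBilinear_mul D).map_add_left
    zero_mul := (isSeriesBilinear_mul D).map_zero_left
    mul_zero := (isSeriesBilinear_mul D).map_zero_right }

variable {D}

@[ext] lemma ext {x y : DeformedAlgebra D} (h : ∀ m, x m = y m) : x = y := funext h

lemma mul_def (x y : DeformedAlgebra D) : x * y = D.mul x y := rfl

lemma sum_apply {ι : Type*} (s : Finset ι) (f : ι → DeformedAlgebra D) (m : ℕ) :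
    (∑ i ∈ s, f i) m = ∑ i ∈ s, f i m :=
  Finset.sum_apply m s f

lemma smul_apply (c : k) (x : DeformedAlgebra D) (m : ℕ) : (c • x) m = c • x m := rfl

instance : Algebra k (DeformedAlgebra D) :=
  Algebra.ofModule
    (fun c x y => funext fun m => by
      rw [smul_apply]; simp [mul_def, FormalDeformation.mul, fdConv, smul_apply, Finset.smul_sum])
    (fun c x y => funext fun m => by
      rw [smul_apply]; simp [mul_def, FormalDeformation.mul, fdConv, smul_apply, Finset.smul_sum])

variable (D) in
def constCoeff : DeformedAlgebra D →+* A where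
  toFun x := x 0
  map_one' := rfl
  map_mul' x y := by simp [mul_def, FormalDeformation.mul, fdConv, D.C_zero]
  map_zero' := rfl
  map_add' _ _ := rfl

lemma mul_apply_of_lt_eq_zero {m : ℕ} (x : DeformedAlgebra D) {z : DeformedAlgebra D}
    (hz : ∀ t < m, z t = 0) : (x * z) m = x 0 * z m := by
  simp only [mul_def, FormalDeformation.mul, fdConv]
  rw [Finset.sum_eq_single (0, m)]
  · rw [Finset.sum_eq_single (0, m)]
    · exact D.C_zero _ _
    · intro q hq hqm
      rw [Finset.HasAntidiagonal.mem_antidiagonal] at hq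
      simp [hz q.2 (by grind)]
    · simp
  · intro p hp hpm
    rw [Finset.HasAntidiagonal.mem_antidiagonal] at hp
    refine Finset.sum_eq_zero fun q hq => ?_
    rw [Finset.HasAntidiagonal.mem_antidiagonal] at hq
    simp [hz q.2 (by grind)]
  · simp

lemma mul_apply_eq_zero {a b : ℕ} {x y : DeformedAlgebra D} (hx : ∀ t < a, x t = 0)
    (hy : ∀ t < b, y t = 0) : ∀ t < a + b, (x * y) t = 0 := by
  intro t ht
  simp only [mul_def, FormalDeformation.mul, fdConv]
  refine Finset.sum_eq_zero fun p hp => Finset.sum_eq_zero fun q hq => ?_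
  rw [Finset.HasAntidiagonal.mem_antidiagonal] at hp hq
  rcases lt_or_ge q.1 a with h | h
  · simp [hx q.1 h]
  · simp [hy q.2 (by omega)]

variable (D) in
def shift : DeformedAlgebra D →+ DeformedAlgebra D where
  toFun := fdShift
  map_zero' := by funext t; cases t <;> rfl
  map_add' := fdShift_add

lemma shift_mul (x y : DeformedAlgebra D) : shift D x * y = shift D (x * y) :=
  (isSeriesBilinear_mul D).map_shift_left x y

lemma mul_shift (x y : DeformedAlgebra D) : x * shift D y = shift D (x * y) :=
  (isSeriesBilinear_mul D).map_shift_right x y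

variable [StarRing A]

instance : StarAddMonoid (DeformedAlgebra D) := inferInstanceAs (StarAddMonoid (ℕ → A))

lemma star_shift (x : DeformedAlgebra D) : star (shift D x) = shift D (star x) := by
  funext t
  cases t
  · exact star_zero A
  · rfl

lemma star_mul_of_isHermitian (hD : D.IsHermitian) (x y : DeformedAlgebra D) :
    star (x * y) = star y * star x :=
  hD x y

variable [StarRing k] [StarModule k A]

instance : StarModule k (DeformedAlgebra D) := inferInstanceAs (StarModule k (ℕ → A))

end DeformedAlgebra

/-! ### Lifting the projection -/

namespace DeformedAlgebra

variable {k A : Type*} [CommRing k] [Ring A] [Algebra k A] {D : FormalDeformation k A}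
variable {ι : Type*}

variable (D ι) in
/-- `λ^m M_ι(qA)`. -/
def lambdaPow (m : ℕ) : AddSubgroup (Matrix ι ι (DeformedAlgebra D)) where
  carrier := {X | ∀ i j, ∀ t < m, X i j t = 0}
  zero_mem' _ _ _ _ := rfl
  add_mem' hX hY i j t ht := by
    change _ + _ = (0 : A)
    rw [hX i j t ht, hY i j t ht, add_zero]
  neg_mem' hX i j t ht := by
    change -_ = (0 : A)
    rw [hX i j t ht, neg_zero]

lemma lambdaPow_anti {a b : ℕ} (hab : a ≤ b) : lambdaPow D ι b ≤ lambdaPow D ι a :=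
  fun _ hX i j t ht => hX i j t (lt_of_lt_of_le ht hab)

variable [Fintype ι]

lemma mul_mem_lambdaPow {a b : ℕ} {X Y : Matrix ι ι (DeformedAlgebra D)}
    (hX : X ∈ lambdaPow D ι a) (hY : Y ∈ lambdaPow D ι b) :
    X * Y ∈ lambdaPow D ι (a + b) := by
  intro i j t ht
  rw [Matrix.mul_apply, sum_apply]
  exact Finset.sum_eq_zero fun s _ => mul_apply_eq_zero (hX i s) (hY s j) t ht

lemma mul_mem_lambdaPow_left {a : ℕ} {X : Matrix ι ι (DeformedAlgebra D)}
    (hX : X ∈ lambdaPow D ι a) (Y : Matrix ι ι (DeformedAlgebra D)) :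
    X * Y ∈ lambdaPow D ι a :=
  mul_mem_lambdaPow (b := 0) hX fun _ _ _ ht => (Nat.not_lt_zero _ ht).elim

lemma mul_mem_lambdaPow_right {a : ℕ} {Y : Matrix ι ι (DeformedAlgebra D)}
    (X : Matrix ι ι (DeformedAlgebra D)) (hY : Y ∈ lambdaPow D ι a) :
    X * Y ∈ lambdaPow D ι a := by
  simpa using mul_mem_lambdaPow (a := 0) (fun _ _ _ ht => (Nat.not_lt_zero _ ht).elim) hY

variable [DecidableEq ι]

lemma mem_lambdaPow_one {X : Matrix ι ι (DeformedAlgebra D)}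
    (hX : (constCoeff D).mapMatrix X = 0) : X ∈ lambdaPow D ι 1 := by
  intro i j t ht
  obtain rfl : t = 0 := Nat.lt_one_iff.mp ht
  exact congrFun (congrFun hX i) j

variable (D) in
/-- Each step doubles the order to which `e` is idempotent. -/
def idempotentApprox (P₀ : Matrix ι ι A) : ℕ → Matrix ι ι (DeformedAlgebra D)
  | 0 => P₀.map fun a => (fdC a : DeformedAlgebra D)
  | k + 1 => 3 * idempotentApprox P₀ k ^ 2 - 2 * idempotentApprox P₀ k ^ 3

variable {P₀ : Matrix ι ι A}

lemma sq_sub_self_idempotentApprox_mem (hP₀ : IsIdempotentElem P₀) (k : ℕ) :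
    idempotentApprox D P₀ k ^ 2 - idempotentApprox D P₀ k ∈ lambdaPow D ι (2 ^ k) := by
  induction k with
  | zero =>
    refine mem_lambdaPow_one ?_
    have h0 : (constCoeff D).mapMatrix (idempotentApprox D P₀ 0) = P₀ := by
      ext i j
      rfl
    rw [map_sub, map_pow, h0, sq, hP₀.eq, sub_self]
  | succ k ih =>
    set e := idempotentApprox D P₀ k
    have key : (3 * e ^ 2 - 2 * e ^ 3) ^ 2 - (3 * e ^ 2 - 2 * e ^ 3)
        = (e ^ 2 - e) * (e ^ 2 - e) * (4 * (e ^ 2 - e) - 3) := by noncomm_ring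
    rw [idempotentApprox, key, pow_succ, mul_two]
    exact mul_mem_lambdaPow_left (mul_mem_lambdaPow ih ih) _

lemma idempotentApprox_sub_mem (hP₀ : IsIdempotentElem P₀) {k l : ℕ} (hkl : k ≤ l) :
    idempotentApprox D P₀ l - idempotentApprox D P₀ k ∈ lambdaPow D ι (2 ^ k) := by
  induction l, hkl using Nat.le_induction with
  | base => simp
  | succ l hkl ih =>
    set e := idempotentApprox D P₀ l
    have key : (3 * e ^ 2 - 2 * e ^ 3) - e = (e ^ 2 - e) * (1 - 2 * e) := by noncomm_ring
    have hstep : idempotentApprox D P₀ (l + 1) - e ∈ lambdaPow D ι (2 ^ k) := by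
      rw [idempotentApprox, key]
      exact lambdaPow_anti (Nat.pow_le_pow_right two_pos hkl)
        (mul_mem_lambdaPow_left (sq_sub_self_idempotentApprox_mem hP₀ l) _)
    simpa using add_mem hstep ih

variable (D P₀) in
/-- The `λ`-adic limit of `idempotentApprox`: the `m`-th approximant is exact to order
`2 ^ m > m`. -/
def deformedProj : Matrix ι ι (DeformedAlgebra D) :=
  Matrix.of fun i j m => idempotentApprox D P₀ m i j m

lemma deformedProj_apply_zero (i j : ι) : deformedProj D P₀ i j 0 = P₀ i j :=
  rfl

lemma deformedProj_sub_mem (hP₀ : IsIdempotentElem P₀) (k : ℕ) :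
    deformedProj D P₀ - idempotentApprox D P₀ k ∈ lambdaPow D ι (2 ^ k) := by
  intro i j t ht
  change idempotentApprox D P₀ t i j t - idempotentApprox D P₀ k i j t = 0
  rcases le_total t k with htk | hkt
  · rw [← neg_sub, neg_eq_zero]
    exact idempotentApprox_sub_mem hP₀ htk i j t Nat.lt_two_pow_self
  · exact idempotentApprox_sub_mem hP₀ hkt i j t ht

lemma isIdempotentElem_deformedProj (hP₀ : IsIdempotentElem P₀) :
    IsIdempotentElem (deformedProj D P₀) := by
  rw [IsIdempotentElem, ← sub_eq_zero]
  ext i j m : 3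
  set P := deformedProj D P₀
  set e := idempotentApprox D P₀ m
  have hd := deformedProj_sub_mem (D := D) hP₀ m
  have key : P * P - P = (P - e) * P + e * (P - e) + (e ^ 2 - e) - (P - e) := by noncomm_ring
  have hmem : P * P - P ∈ lambdaPow D ι (2 ^ m) := by
    rw [key]
    exact sub_mem (add_mem (add_mem (mul_mem_lambdaPow_left hd P) (mul_mem_lambdaPow_right e hd))
      (sq_sub_self_idempotentApprox_mem hP₀ m)) hd
  exact hmem i j m Nat.lt_two_pow_self

end DeformedAlgebra

/-! ### The deformed module -/

namespace DeformedModule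

open DeformedAlgebra MulOpposite

variable {k A : Type*} [CommRing k] [Ring A] [Algebra k A] {D : FormalDeformation k A}
variable {ι : Type*} {P₀ : Matrix ι ι A}

variable (D) in
def toVec (x : ℕ → ι → A) : ι → DeformedAlgebra D := fun i m => x m i

def ofVec (v : ι → DeformedAlgebra D) : ℕ → ι → A := fun m i => v i m

lemma toVec_fdShift (x : ℕ → ι → A) :
    toVec D (fdShift x) = fun i => shift D (toVec D x i) := by
  funext i t; cases t <;> rfl

lemma ofVec_shift (v : ι → DeformedAlgebra D) :
    ofVec (fun i => shift D (v i)) = fdShift (ofVec v) := by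
  funext t i; cases t <;> rfl

variable (D) in
lemma isSeriesBilinear_op_smul :
    IsSeriesBilinear fun (y : ℕ → ι → A) (a : DeformedAlgebra D) =>
      ofVec (op a • toVec D y) where
  map_add_left _ _ _ := congrArg ofVec (smul_add _ _ _)
  map_add_right _ _ _ := congrArg ofVec (add_smul _ _ _)
  map_shift_left y a := by
    rw [← ofVec_shift, toVec_fdShift]
    exact congrArg ofVec (funext fun i => shift_mul _ _)
  map_shift_right y a := by
    rw [← ofVec_shift]
    exact congrArg ofVec (funext fun i => mul_shift (toVec D y i) a)
  causal m y y' a a' hy ha := funext fun i =>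
    (isSeriesBilinear_mul D).causal m _ _ _ _ (fun t ht => congrFun (hy t ht) i) ha

variable [Fintype ι]

variable (P₀) in
def coeffMulVec (x : ℕ → ι → A) : ℕ → ι → A := fun m => P₀ *ᵥ x m

lemma isSeriesLinear_coeffMulVec : IsSeriesLinear (coeffMulVec P₀) :=
  IsSeriesLinear.coeffwise (AddMonoidHom.mk' (P₀ *ᵥ ·) P₀.mulVec_add)

lemma coeffMulVec_idem (hP₀ : IsIdempotentElem P₀) (x : ℕ → ι → A) :
    coeffMulVec P₀ (coeffMulVec P₀ x) = coeffMulVec P₀ x := by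
  funext m; simp only [coeffMulVec, Matrix.mulVec_mulVec, hP₀.eq]

lemma coeffMulVec_smul (c : k) (x : ℕ → ι → A) :
    coeffMulVec P₀ (c • x) = c • coeffMulVec P₀ x :=
  funext fun m => Matrix.mulVec_smul P₀ c (x m)

lemma coeffMulVec_sub (x y : ℕ → ι → A) :
    coeffMulVec P₀ (x - y) = coeffMulVec P₀ x - coeffMulVec P₀ y :=
  funext fun m => Matrix.mulVec_sub P₀ (x m) (y m)

variable (D) in
lemma isSeriesBilinear_star_dotProduct [StarRing A] :
    IsSeriesBilinear fun (y y' : ℕ → ι → A) =>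
      (star (toVec D y) ⬝ᵥ toVec D y' : DeformedAlgebra D) where
  map_add_left y y' z := by
    change star (toVec D y + toVec D y') ⬝ᵥ toVec D z = _
    rw [star_add, add_dotProduct]; rfl
  map_add_right y z z' := by
    change star (toVec D y) ⬝ᵥ (toVec D z + toVec D z') = _
    rw [dotProduct_add]; rfl
  map_shift_left y z := by
    change ∑ i, star (toVec D (fdShift y) i) * toVec D z i =
      shift D (∑ i, star (toVec D y i) * toVec D z i)
    simp only [toVec_fdShift, star_shift, shift_mul, map_sum]
  map_shift_right y z := by
    change ∑ i, star (toVec D y i) * toVec D (fdShift z) i =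
      shift D (∑ i, star (toVec D y i) * toVec D z i)
    simp only [toVec_fdShift, mul_shift, map_sum]
  causal m y y' z z' hy hz := by
    change (∑ i, star (toVec D y i) * toVec D z i) m =
      (∑ i, star (toVec D y' i) * toVec D z' i) m
    simp only [DeformedAlgebra.sum_apply]
    exact Finset.sum_congr rfl fun i _ => (isSeriesBilinear_mul D).causal m _ _ _ _
      (fun t ht => congrArg star (congrFun (hy t ht) i)) fun t ht => congrFun (hz t ht) i

variable [DecidableEq ι]

variable (D P₀) in
/-- `x ↦ P ⋆ x`; on `E[[λ]]` it is an isomorphism onto the projective module `P ⋆ qA^ι`. -/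
def embed (x : ℕ → ι → A) : ι → DeformedAlgebra D := deformedProj D P₀ *ᵥ toVec D x

lemma ofVec_embed_apply_of_lt_eq_zero {m : ℕ} {z : ℕ → ι → A} (hz : ∀ t < m, z t = 0) :
    ofVec (embed D P₀ z) m = P₀ *ᵥ z m := by
  funext i
  simp only [ofVec, embed, Matrix.mulVec, dotProduct, DeformedAlgebra.sum_apply]
  refine Finset.sum_congr rfl fun j _ => ?_
  rw [mul_apply_of_lt_eq_zero (z := toVec D z j) _ fun t ht => congrFun (hz t ht) j,
    deformedProj_apply_zero]
  rfl

lemma ofVec_embed_apply_zero (x : ℕ → ι → A) : ofVec (embed D P₀ x) 0 = P₀ *ᵥ x 0 :=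
  ofVec_embed_apply_of_lt_eq_zero fun _ h => (Nat.not_lt_zero _ h).elim

lemma embed_smul (c : k) (x : ℕ → ι → A) : embed D P₀ (c • x) = c • embed D P₀ x :=
  Matrix.mulVec_smul _ c (toVec D x)

lemma isSeriesLinear_embed : IsSeriesLinear fun x => ofVec (embed D P₀ x) where
  map_add x y := by
    change ofVec (deformedProj D P₀ *ᵥ (toVec D x + toVec D y)) = _
    rw [Matrix.mulVec_add]; rfl
  map_shift x := by
    rw [← ofVec_shift]
    congr 1
    funext i
    simp only [embed, toVec_fdShift, Matrix.mulVec, dotProduct, mul_shift, map_sum]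
  causal m x y hxy := funext fun i => by
    simp only [ofVec, embed, Matrix.mulVec, dotProduct, DeformedAlgebra.sum_apply]
    exact Finset.sum_congr rfl fun j _ => (isSeriesBilinear_mul D).causal m _ _ _ _
      (fun _ _ => rfl) fun t ht => congrFun (hxy t ht) j

variable (D P₀) in
def embedDefect : (ℕ → ι → A) → ℕ → ι → A :=
  (fun x => ofVec (embed D P₀ x)) - coeffMulVec P₀

lemma isSeriesLinear_embedDefect : IsSeriesLinear (embedDefect D P₀) :=
  isSeriesLinear_embed.sub isSeriesLinear_coeffMulVec

lemma isStrictlyCausal_embedDefect : IsStrictlyCausal (embedDefect D P₀) := by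
  intro x y m hxy
  have hz : ∀ t < m, (x - y) t = 0 := fun t ht => sub_eq_zero.mpr (hxy t ht)
  have h := congrFun ((isSeriesLinear_embedDefect (D := D) (P₀ := P₀)).map_add (x - y) y) m
  simp only [sub_add_cancel, Pi.add_apply] at h
  rw [h, embedDefect, Pi.sub_apply, Pi.sub_apply, ofVec_embed_apply_of_lt_eq_zero hz,
    coeffMulVec, sub_self, zero_add]

variable (D P₀) in
/-- Extends `x ↦ P₀ (P ⋆ x)` from `E[[λ]]` (`compare_of_mem`) to an automorphism of
`A^ι[[λ]]`. -/
def compare : (ℕ → ι → A) →ₗ[k] (ℕ → ι → A) where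
  toFun x := x + coeffMulVec P₀ (embedDefect D P₀ x)
  map_add' :=
    (IsSeriesLinear.id.add (isSeriesLinear_coeffMulVec.comp isSeriesLinear_embedDefect)).map_add
  map_smul' c x := by
    have h : ofVec (embed D P₀ (c • x)) = c • ofVec (embed D P₀ x) := by
      rw [embed_smul]; rfl
    funext m
    simp only [embedDefect, coeffMulVec, Pi.sub_apply, h, Pi.add_apply, Pi.smul_apply,
      RingHom.id_apply, ← smul_sub, Matrix.mulVec_smul, smul_add]

lemma compare_apply (x : ℕ → ι → A) :
    compare D P₀ x = x + coeffMulVec P₀ (embedDefect D P₀ x) :=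
  rfl

lemma isSeriesLinear_compare : IsSeriesLinear (compare D P₀) :=
  IsSeriesLinear.id.add (isSeriesLinear_coeffMulVec.comp isSeriesLinear_embedDefect)

lemma isStrictlyCausal_coeffMulVec_embedDefect :
    IsStrictlyCausal fun x => coeffMulVec P₀ (embedDefect D P₀ x) :=
  fun _ _ _ h => by simp only [coeffMulVec, isStrictlyCausal_embedDefect h]

variable (D P₀) in
noncomputable def compareEquiv : (ℕ → ι → A) ≃ₗ[k] (ℕ → ι → A) :=
  LinearEquiv.ofBijective (compare D P₀) isStrictlyCausal_coeffMulVec_embedDefect.bijective_add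

lemma compareEquiv_apply (x : ℕ → ι → A) : compareEquiv D P₀ x = compare D P₀ x :=
  rfl

lemma isSeriesLinear_compareEquiv_symm : IsSeriesLinear (compareEquiv D P₀).symm where
  map_add := map_add _
  map_shift y := (compareEquiv D P₀).injective <| by
    rw [LinearEquiv.apply_symm_apply, compareEquiv_apply, isSeriesLinear_compare.map_shift,
      ← compareEquiv_apply, LinearEquiv.apply_symm_apply]
  causal m y y' h := by
    refine (isStrictlyCausal_coeffMulVec_embedDefect (D := D) (P₀ := P₀)).eq_of_add_eq
      (fun t ht => ?_) m m.lt_succ_self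
    have hy := congrFun ((compareEquiv D P₀).apply_symm_apply y) t
    have hy' := congrFun ((compareEquiv D P₀).apply_symm_apply y') t
    exact hy.trans ((h t (Nat.le_of_lt_succ ht)).trans hy'.symm)

lemma compareEquiv_symm_apply_zero (y : ℕ → ι → A) :
    (compareEquiv D P₀).symm y 0 = y 0 := by
  have hy := congrFun ((compareEquiv D P₀).apply_symm_apply y) 0
  have h0 : coeffMulVec P₀ (embedDefect D P₀ ((compareEquiv D P₀).symm y)) 0 = 0 := by
    refine (isStrictlyCausal_coeffMulVec_embedDefect (D := D) (P₀ := P₀) (y := 0)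
      fun _ h => (Nat.not_lt_zero _ h).elim).trans ?_
    simp only [isSeriesLinear_embedDefect.map_zero, coeffMulVec, Pi.zero_apply, Matrix.mulVec_zero]
  rwa [compareEquiv_apply, compare_apply, Pi.add_apply, h0, add_zero] at hy

lemma compareEquiv_symm_mem (hP₀ : IsIdempotentElem P₀) {y : ℕ → ι → A}
    (hy : coeffMulVec P₀ y = y) :
    coeffMulVec P₀ ((compareEquiv D P₀).symm y) = (compareEquiv D P₀).symm y := by
  set z := (compareEquiv D P₀).symm y
  have hz : z + coeffMulVec P₀ (embedDefect D P₀ z) = y :=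
    (compareEquiv D P₀).apply_symm_apply y
  have h := congrArg (coeffMulVec P₀) hz
  rw [isSeriesLinear_coeffMulVec.map_add, coeffMulVec_idem hP₀, hy, ← hz] at h
  exact add_right_cancel h

lemma compare_of_mem (hP₀ : IsIdempotentElem P₀) {x : ℕ → ι → A}
    (hx : coeffMulVec P₀ x = x) :
    compare D P₀ x = coeffMulVec P₀ (ofVec (embed D P₀ x)) := by
  rw [compare_apply, embedDefect, Pi.sub_apply, coeffMulVec_sub, coeffMulVec_idem hP₀, hx,
    add_sub_cancel]

lemma eq_zero_of_mulVec_eq_self {w : ι → DeformedAlgebra D} (hw : deformedProj D P₀ *ᵥ w = w)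
    (h0 : coeffMulVec P₀ (ofVec w) = 0) : w = 0 := by
  -- `ofVec w` is a fixed point of the strictly causal map `embedDefect`, and so is `0`.
  have hL : embedDefect D P₀ (ofVec w) = ofVec w := by
    rw [embedDefect, Pi.sub_apply, h0, sub_zero]
    exact congrArg ofVec hw
  have hneg : IsStrictlyCausal fun x => -embedDefect D P₀ x :=
    fun _ _ _ h => by simp only [Pi.neg_apply, isStrictlyCausal_embedDefect h]
  have h : ofVec w = 0 := hneg.injective_add (by
    simp only [hL, add_neg_cancel, isSeriesLinear_embedDefect.map_zero, neg_zero, add_zero])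
  funext i m
  exact congrFun (congrFun h m) i

lemma embed_compareEquiv_symm (hP₀ : IsIdempotentElem P₀) {w : ι → DeformedAlgebra D}
    (hw : deformedProj D P₀ *ᵥ w = w) :
    embed D P₀ ((compareEquiv D P₀).symm (coeffMulVec P₀ (ofVec w))) = w := by
  set z := (compareEquiv D P₀).symm (coeffMulVec P₀ (ofVec w))
  have hz : coeffMulVec P₀ z = z := compareEquiv_symm_mem hP₀ (coeffMulVec_idem hP₀ _)
  have hcomp : coeffMulVec P₀ (ofVec (embed D P₀ z)) = coeffMulVec P₀ (ofVec w) := by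
    rw [← compare_of_mem hP₀ hz, ← compareEquiv_apply, LinearEquiv.apply_symm_apply]
  refine sub_eq_zero.mp (eq_zero_of_mulVec_eq_self (P₀ := P₀) ?_ ?_)
  · rw [Matrix.mulVec_sub, hw, embed, Matrix.mulVec_mulVec,
      (isIdempotentElem_deformedProj hP₀).eq]
  · exact (coeffMulVec_sub _ _).trans (sub_eq_zero.mpr hcomp)

variable (D P₀) in
/-- Transported from the right action of `qA` on `P ⋆ qA^ι` along `embed`. -/
noncomputable def act (x : ℕ → ι → A) (a : DeformedAlgebra D) : ℕ → ι → A :=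
  (compareEquiv D P₀).symm (coeffMulVec P₀ (ofVec (op a • embed D P₀ x)))

lemma isSeriesBilinear_act : IsSeriesBilinear fun x (a : DeformedAlgebra D) => act D P₀ x a :=
  (isSeriesBilinear_op_smul D).comp
    (isSeriesLinear_compareEquiv_symm.comp isSeriesLinear_coeffMulVec) isSeriesLinear_embed
    IsSeriesLinear.id

lemma act_smul_left (c : k) (x : ℕ → ι → A) (a : DeformedAlgebra D) :
    act D P₀ (c • x) a = c • act D P₀ x a := by
  have h : ofVec (op a • embed D P₀ (c • x)) = c • ofVec (op a • embed D P₀ x) := by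
    rw [embed_smul, smul_comm]; rfl
  rw [act, h, coeffMulVec_smul, map_smul, act]

lemma act_smul_right (c : k) (x : ℕ → ι → A) (a : DeformedAlgebra D) :
    act D P₀ x (c • a) = c • act D P₀ x a := by
  have h : ofVec (op (c • a) • embed D P₀ x) = c • ofVec (op a • embed D P₀ x) :=
    funext fun m => funext fun i => congrFun (mul_smul_comm c (embed D P₀ x i) a) m
  rw [act, h, coeffMulVec_smul, map_smul, act]

lemma embed_act (hP₀ : IsIdempotentElem P₀) (x : ℕ → ι → A) (a : DeformedAlgebra D) :
    embed D P₀ (act D P₀ x a) = op a • embed D P₀ x :=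
  embed_compareEquiv_symm hP₀ <| by
    rw [Matrix.mulVec_smul, embed, Matrix.mulVec_mulVec, (isIdempotentElem_deformedProj hP₀).eq]

lemma act_mem (hP₀ : IsIdempotentElem P₀) (x : ℕ → ι → A) (a : DeformedAlgebra D) :
    coeffMulVec P₀ (act D P₀ x a) = act D P₀ x a :=
  compareEquiv_symm_mem hP₀ (coeffMulVec_idem hP₀ _)

lemma act_one (hP₀ : IsIdempotentElem P₀) {x : ℕ → ι → A} (hx : coeffMulVec P₀ x = x) :
    act D P₀ x 1 = x := by
  rw [act, op_one, one_smul, ← compare_of_mem hP₀ hx, ← compareEquiv_apply,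
    LinearEquiv.symm_apply_apply]

lemma act_act (hP₀ : IsIdempotentElem P₀) (x : ℕ → ι → A) (a b : DeformedAlgebra D) :
    act D P₀ (act D P₀ x a) b = act D P₀ x (a * b) := by
  rw [act, embed_act hP₀, smul_smul, ← op_mul, act]

lemma act_apply_zero {x : ℕ → ι → A} (hx : P₀ *ᵥ x 0 = x 0) (a : DeformedAlgebra D) :
    act D P₀ x a 0 = op (a 0) • x 0 := by
  have h : ofVec (op a • embed D P₀ x) 0 = op (a 0) • (P₀ *ᵥ x 0) := by
    rw [← ofVec_embed_apply_zero (D := D)]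
    funext i
    exact map_mul (constCoeff D) (embed D P₀ x i) a
  rw [act, compareEquiv_symm_apply_zero, coeffMulVec, h, Matrix.mulVec_smul, hx, hx]

section Inner

variable [StarRing A]

variable (D P₀) in
def innerProduct (x y : ℕ → ι → A) : DeformedAlgebra D :=
  star (embed D P₀ x) ⬝ᵥ embed D P₀ y

lemma isSeriesBilinear_innerProduct : IsSeriesBilinear fun x y => innerProduct D P₀ x y :=
  (isSeriesBilinear_star_dotProduct D).comp IsSeriesLinear.id isSeriesLinear_embed
    isSeriesLinear_embed

lemma innerProduct_apply_zero (x y : ℕ → ι → A) :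
    innerProduct D P₀ x y 0 = star (P₀ *ᵥ x 0) ⬝ᵥ (P₀ *ᵥ y 0) := by
  rw [← ofVec_embed_apply_zero (D := D), ← ofVec_embed_apply_zero (D := D), innerProduct,
    dotProduct, DeformedAlgebra.sum_apply]
  exact Finset.sum_congr rfl fun i _ => map_mul (constCoeff D) _ _

lemma star_innerProduct (hD : D.IsHermitian) (x y : ℕ → ι → A) :
    star (innerProduct D P₀ x y) = innerProduct D P₀ y x := by
  simp only [innerProduct, dotProduct, star_sum, star_mul_of_isHermitian hD, Pi.star_apply,
    star_star]

lemma innerProduct_act (hP₀ : IsIdempotentElem P₀) (x y : ℕ → ι → A)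
    (a : DeformedAlgebra D) :
    innerProduct D P₀ x (act D P₀ y a) = innerProduct D P₀ x y * a := by
  rw [innerProduct, embed_act hP₀, dotProduct_smul]
  rfl

lemma innerProduct_smul_right (c : k) (x y : ℕ → ι → A) :
    innerProduct D P₀ x (c • y) = c • innerProduct D P₀ x y := by
  rw [innerProduct, embed_smul, dotProduct_smul, innerProduct]

variable [StarRing k] [StarModule k A]

lemma innerProduct_smul_left (c : k) (x y : ℕ → ι → A) :
    innerProduct D P₀ (c • x) y = star c • innerProduct D P₀ x y := by
  rw [innerProduct, embed_smul, star_smul, smul_dotProduct, innerProduct]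

end Inner

end DeformedModule

section Assembly

open DeformedModule

variable {C A : Type*} [CommRing C] [Ring A] [Algebra C A] {D : FormalDeformation C A} {n : ℕ}
  {P₀ : Matrix (Fin n) (Fin n) A}

lemma fdConv_act :
    fdConv (fun r u v => act D P₀ (fdC u) (fdC v) r) = fun x (a : ℕ → A) => act D P₀ x a :=
  isSeriesBilinear_act.fdConv_eq

variable [StarRing A]

lemma fdConv_innerProduct :
    fdConv (fun r u v => innerProduct D P₀ (fdC u) (fdC v) r) =
      fun x y => innerProduct D P₀ x y :=
  isSeriesBilinear_innerProduct.fdConv_eq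

variable [StarRing C] [StarModule C A]

variable (D P₀) in
noncomputable def hermitianDeformedModule (hD : D.IsHermitian) (hP₀ : IsIdempotentElem P₀) :
    HermitianDeformedModule D P₀ where
  R r x a := act D P₀ (fdC x) (fdC a) r
  h r x y := innerProduct D P₀ (fdC x) (fdC y) r
  R_zero x a hx := act_apply_zero (x := fdC x) hx (fdC a)
  R_mem r x a _ := congrFun (act_mem hP₀ _ _) r
  R_add_left r x x' a _ _ := by
    rw [fdC_add]; exact congrFun (isSeriesBilinear_act.map_add_left _ _ _) r
  R_add_right r x a a' _ := by
    rw [fdC_add]; exact congrFun (isSeriesBilinear_act.map_add_right _ _ _) r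
  R_smul_left r c x a _ := by
    rw [fdC_smul]; exact congrFun (act_smul_left c (fdC x) (fdC a)) r
  R_smul_right r c x a _ := by
    rw [fdC_smul]; exact congrFun (act_smul_right c (fdC x) (fdC a)) r
  act_one x hx := by rw [fdConv_act]; exact act_one hP₀ (funext hx)
  act_assoc x a b _ := by rw [fdConv_act]; exact act_act hP₀ x a b
  h_zero x y hx hy := by
    rw [innerProduct_apply_zero, fdC_apply_zero, fdC_apply_zero, hx, hy]
    rfl
  h_add_left r x x' y _ _ _ := by
    rw [fdC_add]; exact congrFun (isSeriesBilinear_innerProduct.map_add_left _ _ _) r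
  h_add_right r x y y' _ _ _ := by
    rw [fdC_add]; exact congrFun (isSeriesBilinear_innerProduct.map_add_right _ _ _) r
  h_smul_left r c x y _ _ := by
    rw [fdC_smul]; exact congrFun (innerProduct_smul_left c (fdC x) (fdC y)) r
  h_smul_right r c x y _ _ := by
    rw [fdC_smul]; exact congrFun (innerProduct_smul_right c (fdC x) (fdC y)) r
  h_herm x y _ _ := by rw [fdConv_innerProduct]; exact star_innerProduct hD x y
  h_mod x y a _ _ := by
    rw [fdConv_act, fdConv_innerProduct]; exact innerProduct_act hP₀ x y a

end Assembly

theorem hermitian_module_deformation_exists_general {C A : Type*} [CommRing C] [StarRing C]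
    [Ring A] [Algebra C A] [StarRing A] [StarModule C A]
    (D : FormalDeformation C A) (hD : D.IsHermitian) (n : ℕ)
    (P₀ : Matrix (Fin n) (Fin n) A)
    (hP₀idem : P₀ * P₀ = P₀) :
    ∃ M : HermitianDeformedModule D P₀,
      ∀ x : ℕ → Fin n → A, (∀ m, P₀.mulVec (x m) = x m) →
        ∃ b : Fin n → ℕ → A,
          fdConv M.h x x = ∑ i, D.mul (fdStar (b i)) (b i) := by
  refine ⟨hermitianDeformedModule D P₀ hD hP₀idem, fun x _ =>
    ⟨DeformedModule.embed D P₀ x, ?_⟩⟩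
  change fdConv (fun r u v => DeformedModule.innerProduct D P₀ (fdC u) (fdC v) r) x x = _
  rw [fdConv_innerProduct]
  rfl

/-- Proposition 2.10, existence part. For a Hermitian deformation
`qA` of `A` and a projection `P₀ ∈ Mₙ(A)`, the inner-product module
`(E = P₀Aⁿ, h₀)` admits a Hermitian deformation; moreover `h(x,x)` is a sum of
`n` elements of the form `b* ⋆ b`, hence algebraically positive. -/
theorem hermitian_module_deformation_exists {C A : Type*} [CommRing C] [StarRing C]
    [Invertible (2 : C)] [Ring A] [Algebra C A] [StarRing A] [StarModule C A]
    (D : FormalDeformation C A) (hD : D.IsHermitian) (n : ℕ)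
    (P₀ : Matrix (Fin n) (Fin n) A)
    (hP₀idem : P₀ * P₀ = P₀) (hP₀herm : P₀ᴴ = P₀) :
    ∃ M : HermitianDeformedModule D P₀,
      ∀ x : ℕ → Fin n → A, (∀ m, P₀.mulVec (x m) = x m) →
        ∃ b : Fin n → ℕ → A,
          fdConv M.h x x = ∑ i, D.mul (fdStar (b i)) (b i) :=
  hermitian_module_deformation_exists_general D hD n P₀ hP₀idem
end
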